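/- arXiv:1904.11707 — 5 statements merged into one kernel-verified Lean document; each statement's English description precedes it below -/
import Mathlib

section
/- Let ρ : ℝ^N → ℝ be a convex risk measure (monotone, translation invariant, convex). Define α : ℝ^N → ℝ ∪ {+∞} by α(q) = sup{⟨q, X⟩ : X ∈ ℝ^N, ρ(X) ≤ 0} for q ∈ M₁ and α(q) = +∞ for q ∉ M₁. Then: (i) for every X ∈ ℝ^N, ρ(X) = sup_{q ∈ M₁} (⟨q, X⟩ − α(q)); (ii) for every q ∈ M₁, α(q) = sup_{X ∈ ℝ^N} (⟨q, X⟩ − ρ(X)). -/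
open scoped BigOperators
open Classical

/-- The penalty function `α` associated with a risk measure `ρ`:
`α(q) = sup {⟨q,X⟩ : ρ(X) ≤ 0}` for `q ∈ M₁`, and `+∞` outside `M₁`. -/
noncomputable def alphaOf {N : ℕ} (ρ : (Fin N → ℝ) → ℝ) (q : Fin N → ℝ) : EReal :=
  if q ∈ stdSimplex ℝ (Fin N) then
    ⨆ X ∈ {X : Fin N → ℝ | ρ X ≤ 0}, (((∑ i, q i * X i : ℝ)) : EReal)
  else ⊤

/-!
The acceptance set `{ρ < 0}` is convex, open (a monotone, translation invariant `ρ`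
is 1-Lipschitz for the sup distance) and a lower set. Separating `X - ρ X`, which lies outside
it, by Hahn–Banach gives a functional that is nonnegative on the coordinate vectors, hence a
probability vector `q` after normalisation, with `α(q) ≤ ⟨q, X⟩ - ρ X`. Translation invariance
gives the reverse inequality for every `q`, so the supremum in (i) is attained at this `q`, and
(ii) is a rewriting of the definition of `α`.
-/

theorem exists_mem_stdSimplex_forall_lt {ι : Type*} [Fintype ι] {s : Set (ι → ℝ)}
    (hs_conv : Convex ℝ s) (hs_open : IsOpen s) (hs_lower : IsLowerSet s) (hs_ne : s.Nonempty)
    {x : ι → ℝ} (hx : x ∉ s) : ∃ q ∈ stdSimplex ℝ ι, ∀ y ∈ s, ∑ i, q i * y i < ∑ i, q i * x i := by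
  obtain ⟨f, hf⟩ := geometric_hahn_banach_open_point hs_conv hs_open hx
  obtain ⟨y₀, hy₀⟩ := hs_ne
  set c : ι → ℝ := fun i => f (Pi.single i 1)
  have hsingle : ∀ i : ι, (fun j => if i = j then (1 : ℝ) else 0) = Pi.single i 1 := fun i => by
    ext j; simp [Pi.single_apply, eq_comm]
  have hrep : ∀ z, f z = ∑ i, z i * c i := fun z => by
    simpa only [hsingle, smul_eq_mul, ContinuousLinearMap.coe_coe] using
      LinearMap.pi_apply_eq_sum_univ f.toLinearMap z
  have hc_nonneg : ∀ i, 0 ≤ c i := by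
    intro i
    by_contra! hci
    -- moving down from `y₀` along the `i`-th axis would eventually reach the level `f x`
    set t := (f x - f y₀) / -c i
    have hmem : y₀ - t • Pi.single i 1 ∈ s := by
      refine hs_lower (fun j => ?_) hy₀
      have ht : 0 ≤ t := div_nonneg (sub_nonneg.2 (hf y₀ hy₀).le) (neg_nonneg.2 hci.le)
      by_cases hji : j = i
      · subst hji; simpa using ht
      · simp [hji]
    have htc : t * c i = f y₀ - f x := by
      simp only [t]; field_simp [hci.ne]; ring
    have hlt := hf _ hmem
    rw [map_sub, map_smul, smul_eq_mul] at hlt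
    change f y₀ - t * c i < f x at hlt
    linarith
  set F := ∑ i, c i
  have hF : 0 < F := by
    refine (Finset.sum_nonneg fun i _ => hc_nonneg i).lt_of_ne fun hF0 => ?_
    have hc0 := (Finset.sum_eq_zero_iff_of_nonneg fun i _ => hc_nonneg i).1 hF0.symm
    have hf0 : ∀ z, f z = 0 := fun z => by
      rw [hrep z]; exact Finset.sum_eq_zero fun i hi => by rw [hc0 i hi, mul_zero]
    exact (hf y₀ hy₀).ne (by rw [hf0, hf0])
  refine ⟨fun i => c i / F, ⟨fun i => div_nonneg (hc_nonneg i) hF.le, ?_⟩, fun y hy => ?_⟩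
  · rw [← Finset.sum_div, div_self hF.ne']
  · have hq : ∀ z : ι → ℝ, ∑ i, c i / F * z i = f z / F := fun z => by
      rw [hrep z, Finset.sum_div]
      exact Finset.sum_congr rfl fun i _ => by ring
    rw [hq, hq]
    exact div_lt_div_of_pos_right (hf y hy) hF

theorem convex_setOf_lt_zero {E : Type*} [AddCommGroup E] [Module ℝ E] {ρ : E → ℝ}
    (hconv : ∀ X Y : E, ∀ t : ℝ, 0 < t → t < 1 →
      ρ (t • X + (1 - t) • Y) ≤ t * ρ X + (1 - t) * ρ Y) :
    Convex ℝ {X | ρ X < 0} := by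
  have hρ : ConvexOn ℝ Set.univ ρ := by
    refine convexOn_iff_forall_pos.2 ⟨convex_univ, fun X _ Y _ a b ha hb hab => ?_⟩
    obtain rfl : b = 1 - a := by linarith
    exact hconv X Y a ha (by linarith)
  simpa using hρ.convex_lt 0

section RiskMeasure

variable {ι : Type*} [Fintype ι] {ρ : (ι → ℝ) → ℝ}

theorem sum_mul_add_const_of_mem_stdSimplex {q : ι → ℝ} (hq : q ∈ stdSimplex ℝ ι)
    (X : ι → ℝ) (m : ℝ) : ∑ i, q i * (X + fun _ => m : ι → ℝ) i = ∑ i, q i * X i + m := by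
  simp only [Pi.add_apply, mul_add, Finset.sum_add_distrib, ← Finset.sum_mul, hq.2, one_mul]

theorem lipschitzWith_one_of_monotone_of_add_const (hmono : ∀ X Y, X ≤ Y → ρ X ≤ ρ Y)
    (htrans : ∀ (X : ι → ℝ) (m : ℝ), ρ (X + fun _ => m) = ρ X + m) : LipschitzWith 1 ρ := by
  refine LipschitzWith.of_le_add fun X Y => ?_
  have hle : X ≤ Y + fun _ => dist X Y := fun j =>
    (sub_le_iff_le_add'.1 ((Real.sub_le_dist _ _).trans (dist_le_pi_dist X Y j)))
  exact (hmono _ _ hle).trans_eq (htrans _ _)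

theorem exists_mem_stdSimplex_forall_le_sub (hmono : ∀ X Y, X ≤ Y → ρ X ≤ ρ Y)
    (htrans : ∀ (X : ι → ℝ) (m : ℝ), ρ (X + fun _ => m) = ρ X + m)
    (hconv : ∀ X Y : ι → ℝ, ∀ t : ℝ, 0 < t → t < 1 →
      ρ (t • X + (1 - t) • Y) ≤ t * ρ X + (1 - t) * ρ Y) (X : ι → ℝ) :
    ∃ q ∈ stdSimplex ℝ ι, ∀ Y, ρ Y ≤ 0 → ∑ i, q i * Y i ≤ ∑ i, q i * X i - ρ X := by
  have hcont := (lipschitzWith_one_of_monotone_of_add_const hmono htrans).continuous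
  have hlower : IsLowerSet {X | ρ X < 0} := fun _ _ hle h => (hmono _ _ hle).trans_lt h
  have hne : {X | ρ X < 0}.Nonempty :=
    ⟨0 + fun _ => -ρ 0 - 1, show ρ _ < 0 by rw [htrans]; linarith⟩
  have hX : X + (fun _ => -ρ X) ∉ {X | ρ X < 0} := by simp [htrans]
  obtain ⟨q, hq, hsep⟩ := exists_mem_stdSimplex_forall_lt (convex_setOf_lt_zero hconv)
    (isOpen_lt hcont continuous_const) hlower hne hX
  refine ⟨q, hq, fun Y hY => le_of_forall_pos_lt_add fun ε hε => ?_⟩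
  have hYε := hsep (Y + fun _ => -ε) (show ρ _ < 0 by rw [htrans]; linarith)
  rw [sum_mul_add_const_of_mem_stdSimplex hq, sum_mul_add_const_of_mem_stdSimplex hq] at hYε
  linarith

end RiskMeasure

section Penalty

variable {N : ℕ} {ρ : (Fin N → ℝ) → ℝ} {q : Fin N → ℝ}

theorem le_alphaOf (hq : q ∈ stdSimplex ℝ (Fin N)) {Y : Fin N → ℝ} (hY : ρ Y ≤ 0) :
    ((∑ i, q i * Y i : ℝ) : EReal) ≤ alphaOf ρ q := by
  rw [alphaOf, if_pos hq]
  exact le_iSup₂_of_le (f := fun X (_ : ρ X ≤ 0) => ((∑ i, q i * X i : ℝ) : EReal)) Y hY le_rfl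

theorem alphaOf_le (hq : q ∈ stdSimplex ℝ (Fin N)) {c : EReal}
    (h : ∀ Y, ρ Y ≤ 0 → ((∑ i, q i * Y i : ℝ) : EReal) ≤ c) : alphaOf ρ q ≤ c := by
  rw [alphaOf, if_pos hq]
  exact iSup₂_le h

theorem coe_sub_le_alphaOf (htrans : ∀ (X : Fin N → ℝ) (m : ℝ), ρ (X + fun _ => m) = ρ X + m)
    (hq : q ∈ stdSimplex ℝ (Fin N)) (X : Fin N → ℝ) :
    ((∑ i, q i * X i - ρ X : ℝ) : EReal) ≤ alphaOf ρ q := by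
  have h := le_alphaOf (ρ := ρ) hq (Y := X + fun _ => -ρ X) (by rw [htrans]; linarith)
  rwa [sum_mul_add_const_of_mem_stdSimplex hq, ← sub_eq_add_neg] at h

theorem coe_sub_alphaOf_le (htrans : ∀ (X : Fin N → ℝ) (m : ℝ), ρ (X + fun _ => m) = ρ X + m)
    (hq : q ∈ stdSimplex ℝ (Fin N)) (X : Fin N → ℝ) :
    ((∑ i, q i * X i : ℝ) : EReal) - alphaOf ρ q ≤ ρ X :=
  calc ((∑ i, q i * X i : ℝ) : EReal) - alphaOf ρ q
      ≤ ((∑ i, q i * X i : ℝ) : EReal) - ((∑ i, q i * X i - ρ X : ℝ) : EReal) :=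
        EReal.sub_le_sub le_rfl (coe_sub_le_alphaOf htrans hq X)
    _ = ρ X := by rw [← EReal.coe_sub, sub_sub_cancel]

end Penalty

theorem stmt_3_general {N : ℕ} (ρ : (Fin N → ℝ) → ℝ)
    (hmono : ∀ X Y : Fin N → ℝ, X ≤ Y → ρ X ≤ ρ Y)
    (htrans : ∀ (X : Fin N → ℝ) (m : ℝ), ρ (X + fun _ => m) = ρ X + m)
    (hconv : ∀ X Y : Fin N → ℝ, ∀ t : ℝ, 0 < t → t < 1 →
      ρ (t • X + (1 - t) • Y) ≤ t * ρ X + (1 - t) * ρ Y) :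
    (∀ X : Fin N → ℝ,
      ((ρ X : ℝ) : EReal)
        = ⨆ q ∈ stdSimplex ℝ (Fin N), (((∑ i, q i * X i : ℝ)) : EReal) - alphaOf ρ q) ∧
    (∀ q ∈ stdSimplex ℝ (Fin N),
      alphaOf ρ q
        = ⨆ X : Fin N → ℝ, (((∑ i, q i * X i : ℝ)) : EReal) - ((ρ X : ℝ) : EReal)) := by
  refine ⟨fun X => le_antisymm ?_ (iSup₂_le fun q hq => coe_sub_alphaOf_le htrans hq X),
    fun q hq => le_antisymm ?_ (iSup_le fun X => ?_)⟩
  · obtain ⟨q, hq, hsep⟩ := exists_mem_stdSimplex_forall_le_sub hmono htrans hconv X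
    have hα : alphaOf ρ q ≤ ((∑ i, q i * X i - ρ X : ℝ) : EReal) :=
      alphaOf_le hq fun Y hY => EReal.coe_le_coe_iff.2 (hsep Y hY)
    refine le_iSup₂_of_le q hq ?_
    calc ((ρ X : ℝ) : EReal)
        = ((∑ i, q i * X i : ℝ) : EReal) - ((∑ i, q i * X i - ρ X : ℝ) : EReal) := by
          rw [← EReal.coe_sub, sub_sub_cancel]
      _ ≤ ((∑ i, q i * X i : ℝ) : EReal) - alphaOf ρ q := EReal.sub_le_sub le_rfl hα
  · refine alphaOf_le hq fun Y hY => le_iSup_of_le Y ?_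
    rw [← EReal.coe_sub, EReal.coe_le_coe_iff]
    linarith
  · rw [← EReal.coe_sub]
    exact coe_sub_le_alphaOf htrans hq X

/-- for a convex risk measure `ρ` (monotone, translation invariant, convex),
with `α` as above: (i) `ρ(X) = sup_{q ∈ M₁} (⟨q,X⟩ − α(q))` for all `X`;
(ii) `α(q) = sup_X (⟨q,X⟩ − ρ(X))` for all `q ∈ M₁`. -/
theorem stmt_3 {N : ℕ} (hN : 1 ≤ N) (ρ : (Fin N → ℝ) → ℝ)
    (hmono : ∀ X Y : Fin N → ℝ, X ≤ Y → ρ X ≤ ρ Y)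
    (htrans : ∀ (X : Fin N → ℝ) (m : ℝ), ρ (X + fun _ => m) = ρ X + m)
    (hconv : ∀ X Y : Fin N → ℝ, ∀ t : ℝ, 0 < t → t < 1 →
      ρ (t • X + (1 - t) • Y) ≤ t * ρ X + (1 - t) * ρ Y) :
    (∀ X : Fin N → ℝ,
      ((ρ X : ℝ) : EReal)
        = ⨆ q ∈ stdSimplex ℝ (Fin N), (((∑ i, q i * X i : ℝ)) : EReal) - alphaOf ρ q) ∧
    (∀ q ∈ stdSimplex ℝ (Fin N),
      alphaOf ρ q
        = ⨆ X : Fin N → ℝ, (((∑ i, q i * X i : ℝ)) : EReal) - ((ρ X : ℝ) : EReal)) :=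
  stmt_3_general ρ hmono htrans hconv
end

section
/- Let ρ : ℝ^N → ℝ be a coherent risk measure (monotone, translation invariant, convex, positively homogeneous). Define α(q) = sup{⟨q, X⟩ : X ∈ ℝ^N, ρ(X) ≤ 0} for q ∈ M₁ and α(q) = +∞ for q ∉ M₁. Then α takes only the values 0 and +∞; moreover the set Q = {q ∈ M₁ : α(q) = 0} is a nonempty, closed, convex subset of M₁, and for every X ∈ ℝ^N, ρ(X) = max_{q ∈ Q} ⟨q, X⟩. -/
/-! A coherent risk measure is sublinear, so by Hahn–Banach it is the pointwise maximum of the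
linear functionals below it, and monotonicity together with translation invariance forces each of
these to be `X ↦ ⟨q, X⟩` with `q ∈ M₁`. Such a `q` lies below `ρ` exactly when `⟨q, X⟩ ≤ 0` on the
acceptance set `{ρ ≤ 0}`, i.e. when `α q = 0`; since the acceptance set is a cone, `α q = +∞`
otherwise. Being the intersection of `M₁` with closed half-spaces, `Q` is closed and convex. -/

open scoped BigOperators
open Classical

open Finset

section Sublinear

variable {E : Type*} [AddCommGroup E] [Module ℝ E] {ρ : E → ℝ}

lemma map_zero_of_posHomogeneous (hhom : ∀ (X : E) (t : ℝ), 0 ≤ t → ρ (t • X) = t * ρ X) :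
    ρ 0 = 0 := by
  simpa using hhom 0 0 le_rfl

lemma map_add_le_of_convex_of_posHomogeneous
    (hconv : ∀ X Y : E, ∀ t : ℝ, 0 < t → t < 1 →
      ρ (t • X + (1 - t) • Y) ≤ t * ρ X + (1 - t) * ρ Y)
    (hhom : ∀ (X : E) (t : ℝ), 0 ≤ t → ρ (t • X) = t * ρ X) (X Y : E) :
    ρ (X + Y) ≤ ρ X + ρ Y := by
  have hmid : X + Y = (2 : ℝ) • ((1 / 2 : ℝ) • X + (1 - 1 / 2 : ℝ) • Y) := by
    rw [smul_add, smul_smul, smul_smul]; norm_num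
  have := hconv X Y (1 / 2) (by norm_num) (by norm_num)
  rw [hmid, hhom _ 2 zero_le_two]
  linarith

lemma mul_le_map_smul (hsub : ∀ X Y : E, ρ (X + Y) ≤ ρ X + ρ Y)
    (hhom : ∀ (X : E) (t : ℝ), 0 ≤ t → ρ (t • X) = t * ρ X) (X : E) (t : ℝ) :
    t * ρ X ≤ ρ (t • X) := by
  rcases le_or_gt 0 t with ht | ht
  · rw [hhom X t ht]
  · have hXnegX : 0 ≤ ρ X + ρ (-X) := by
      simpa [map_zero_of_posHomogeneous hhom] using hsub X (-X)
    have : ρ (t • X) = -t * ρ (-X) := by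
      rw [← hhom _ _ (neg_nonneg.mpr ht.le), neg_smul_neg]
    nlinarith

-- Hahn–Banach, extending `c • X ↦ c * ρ X` from the line through `X`.
lemma exists_linearMap_le_and_eq (hsub : ∀ X Y : E, ρ (X + Y) ≤ ρ X + ρ Y)
    (hhom : ∀ (X : E) (t : ℝ), 0 ≤ t → ρ (t • X) = t * ρ X) (X : E) :
    ∃ g : E →ₗ[ℝ] ℝ, (∀ Y, g Y ≤ ρ Y) ∧ g X = ρ X := by
  have hker : ∀ c : ℝ, c • X = 0 → c • ρ X = 0 := by
    intro c hc
    rcases smul_eq_zero.mp hc with rfl | rfl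
    · exact zero_smul ℝ _
    · rw [map_zero_of_posHomogeneous hhom, smul_zero]
  let f := LinearPMap.mkSpanSingleton' (σ := RingHom.id ℝ) X (ρ X) hker
  obtain ⟨g, hgf, hgρ⟩ := exists_extension_of_le_sublinear f ρ
    (fun c hc Y => hhom Y c hc.le) hsub <| by
      rintro ⟨_, hY⟩
      obtain ⟨c, rfl⟩ := Submodule.mem_span_singleton.mp hY
      rw [LinearPMap.mkSpanSingleton'_apply, smul_eq_mul]
      exact mul_le_map_smul hsub hhom X c
  refine ⟨g, hgρ, ?_⟩
  rw [hgf ⟨X, Submodule.mem_span_singleton_self X⟩]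
  exact LinearPMap.mkSpanSingleton'_apply_self _ _ _ _

end Sublinear

section RiskMeasure

variable {N : ℕ} {ρ : (Fin N → ℝ) → ℝ}

lemma isLinearMap_sum_mul (X : Fin N → ℝ) : IsLinearMap ℝ fun q : Fin N → ℝ => ∑ i, q i * X i :=
  ⟨fun q q' => by simp only [Pi.add_apply, add_mul, sum_add_distrib],
    fun c q => by simp only [Pi.smul_apply, smul_eq_mul, mul_sum, mul_assoc]⟩

lemma sum_mul_add_const {q : Fin N → ℝ} (hq : q ∈ stdSimplex ℝ (Fin N)) (X : Fin N → ℝ)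
    (m : ℝ) : ∑ i, q i * (X + fun _ => m : Fin N → ℝ) i = ∑ i, q i * X i + m := by
  simp only [Pi.add_apply, mul_add, sum_add_distrib, ← sum_mul, hq.2, one_mul]

lemma alphaOf_eq_zero_iff (hρ0 : ρ 0 ≤ 0) {q : Fin N → ℝ} (hq : q ∈ stdSimplex ℝ (Fin N)) :
    alphaOf ρ q = 0 ↔ ∀ X, ρ X ≤ 0 → ∑ i, q i * X i ≤ 0 := by
  rw [alphaOf, if_pos hq]
  constructor
  · intro h X hX
    have := le_iSup₂ (f := fun (X : Fin N → ℝ) (_ : X ∈ {X | ρ X ≤ 0}) =>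
      ((∑ i, q i * X i : ℝ) : EReal)) X hX
    exact EReal.coe_nonpos.mp (h ▸ this)
  · intro h
    refine le_antisymm (iSup₂_le fun X hX => EReal.coe_nonpos.mpr (h X hX)) ?_
    simpa using le_iSup₂ (f := fun (X : Fin N → ℝ) (_ : X ∈ {X | ρ X ≤ 0}) =>
      ((∑ i, q i * X i : ℝ) : EReal)) 0 hρ0

-- The values `⟨q, X⟩` over the acceptance set `{ρ ≤ 0}` form a cone, so their supremum is
-- `0` or `+∞`.
lemma alphaOf_eq_zero_or_eq_top
    (hhom : ∀ (X : Fin N → ℝ) (t : ℝ), 0 ≤ t → ρ (t • X) = t * ρ X)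
    (q : Fin N → ℝ) : alphaOf ρ q = 0 ∨ alphaOf ρ q = ⊤ := by
  by_cases hq : q ∈ stdSimplex ℝ (Fin N)
  swap
  · exact Or.inr (if_neg hq)
  by_cases hα : ∀ X, ρ X ≤ 0 → ∑ i, q i * X i ≤ 0
  · exact Or.inl ((alphaOf_eq_zero_iff (map_zero_of_posHomogeneous hhom).le hq).mpr hα)
  push Not at hα
  obtain ⟨X, hX, hqX⟩ := hα
  refine Or.inr (EReal.eq_top_iff_forall_lt _ |>.mpr fun y => ?_)
  set t := (|y| + 1) / ∑ i, q i * X i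
  have ht : 0 ≤ t := by positivity
  have htX : ∑ i, q i * (t • X) i = |y| + 1 := by
    simp only [Pi.smul_apply, smul_eq_mul, mul_left_comm _ t, ← mul_sum]
    exact div_mul_cancel₀ _ hqX.ne'
  rw [alphaOf, if_pos hq]
  refine lt_of_lt_of_le ?_ (le_iSup₂ (f := fun (X : Fin N → ℝ) (_ : X ∈ {X | ρ X ≤ 0}) =>
    ((∑ i, q i * X i : ℝ) : EReal)) (t • X) ?_)
  · rw [htX, EReal.coe_lt_coe_iff]
    linarith [le_abs_self y]
  · show ρ (t • X) ≤ 0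
    rw [hhom X t ht]
    exact mul_nonpos_of_nonneg_of_nonpos ht hX

lemma setOf_alphaOf_eq_zero_eq (hρ0 : ρ 0 ≤ 0) :
    {q ∈ stdSimplex ℝ (Fin N) | alphaOf ρ q = 0} =
      stdSimplex ℝ (Fin N) ∩ ⋂ X ∈ {X | ρ X ≤ 0}, {q | ∑ i, q i * X i ≤ 0} := by
  ext q
  simp only [Set.mem_ofPred_eq, Set.mem_inter_iff, Set.mem_iInter]
  exact and_congr_right fun hq => alphaOf_eq_zero_iff hρ0 hq

lemma sum_mul_le_of_alphaOf_eq_zero (hρ0 : ρ 0 ≤ 0)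
    (htrans : ∀ (X : Fin N → ℝ) (m : ℝ), ρ (X + fun _ => m) = ρ X + m)
    {q : Fin N → ℝ} (hq : q ∈ stdSimplex ℝ (Fin N)) (hα : alphaOf ρ q = 0) (X : Fin N → ℝ) :
    ∑ i, q i * X i ≤ ρ X := by
  have := (alphaOf_eq_zero_iff hρ0 hq).mp hα (X + fun _ => -ρ X) (by rw [htrans]; linarith)
  rw [sum_mul_add_const hq] at this
  linarith

lemma exists_mem_stdSimplex_of_linearMap_le (hρ0 : ρ 0 = 0)
    (hmono : ∀ X Y : Fin N → ℝ, X ≤ Y → ρ X ≤ ρ Y)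
    (htrans : ∀ (X : Fin N → ℝ) (m : ℝ), ρ (X + fun _ => m) = ρ X + m)
    (g : (Fin N → ℝ) →ₗ[ℝ] ℝ) (hg : ∀ Y, g Y ≤ ρ Y) :
    ∃ q ∈ stdSimplex ℝ (Fin N), ∀ Y, g Y = ∑ i, q i * Y i := by
  set q : Fin N → ℝ := fun i => g fun j => if i = j then 1 else 0
  have hgq : ∀ Y, g Y = ∑ i, q i * Y i := fun Y => by
    rw [g.pi_apply_eq_sum_univ]
    exact sum_congr rfl fun i _ => by rw [smul_eq_mul, mul_comm]
  have hconst : ∀ m : ℝ, ρ (fun _ => m) = m := fun m => by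
    simpa [hρ0] using htrans 0 m
  refine ⟨q, ⟨fun i => ?_, ?_⟩, hgq⟩
  · have hneg : -(fun j => if i = j then (1 : ℝ) else 0) ≤ 0 := fun j => by
      by_cases h : i = j <;> simp [h]
    have := (hg _).trans ((hmono _ _ hneg).trans_eq hρ0)
    rw [map_neg] at this
    exact neg_nonpos.mp this
  · have hle := hg fun _ => 1
    have hge := hg fun _ => -1
    rw [hconst] at hle hge
    rw [show (fun _ : Fin N => (-1 : ℝ)) = -fun _ => 1 from rfl, map_neg] at hge
    simpa using (hgq fun _ => 1).symm.trans (le_antisymm hle (by linarith))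

end RiskMeasure

theorem stmt_4_general {N : ℕ} (ρ : (Fin N → ℝ) → ℝ)
    (hmono : ∀ X Y : Fin N → ℝ, X ≤ Y → ρ X ≤ ρ Y)
    (htrans : ∀ (X : Fin N → ℝ) (m : ℝ), ρ (X + fun _ => m) = ρ X + m)
    (hconv : ∀ X Y : Fin N → ℝ, ∀ t : ℝ, 0 < t → t < 1 →
      ρ (t • X + (1 - t) • Y) ≤ t * ρ X + (1 - t) * ρ Y)
    (hhom : ∀ (X : Fin N → ℝ) (t : ℝ), 0 ≤ t → ρ (t • X) = t * ρ X) :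
    (∀ q : Fin N → ℝ, alphaOf ρ q = 0 ∨ alphaOf ρ q = ⊤) ∧
    ({q ∈ stdSimplex ℝ (Fin N) | alphaOf ρ q = 0}.Nonempty ∧
      IsClosed {q ∈ stdSimplex ℝ (Fin N) | alphaOf ρ q = 0} ∧
      Convex ℝ {q ∈ stdSimplex ℝ (Fin N) | alphaOf ρ q = 0} ∧
      {q ∈ stdSimplex ℝ (Fin N) | alphaOf ρ q = 0} ⊆ stdSimplex ℝ (Fin N)) ∧
    (∀ X : Fin N → ℝ,
      IsGreatest ((fun q : Fin N → ℝ => ∑ i, q i * X i) ''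
        {q ∈ stdSimplex ℝ (Fin N) | alphaOf ρ q = 0}) (ρ X)) := by
  have hρ0 := map_zero_of_posHomogeneous hhom
  have hsub := map_add_le_of_convex_of_posHomogeneous hconv hhom
  have hattained : ∀ X, ∃ q ∈ {q ∈ stdSimplex ℝ (Fin N) | alphaOf ρ q = 0},
      ∑ i, q i * X i = ρ X := fun X => by
    obtain ⟨g, hgρ, hgX⟩ := exists_linearMap_le_and_eq hsub hhom X
    obtain ⟨q, hq, hgq⟩ := exists_mem_stdSimplex_of_linearMap_le hρ0 hmono htrans g hgρ
    refine ⟨q, ⟨hq, (alphaOf_eq_zero_iff hρ0.le hq).mpr fun Y hY => ?_⟩, (hgq X) ▸ hgX⟩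
    exact (hgq Y) ▸ (hgρ Y).trans hY
  refine ⟨alphaOf_eq_zero_or_eq_top hhom, ⟨(hattained 0).imp fun _ h => h.1, ?_, ?_,
    fun q hq => hq.1⟩, fun X => ⟨hattained X, ?_⟩⟩
  · rw [setOf_alphaOf_eq_zero_eq hρ0.le]
    exact (isClosed_stdSimplex ℝ _).inter <| isClosed_biInter fun X _ =>
      isClosed_le (by fun_prop) continuous_const
  · rw [setOf_alphaOf_eq_zero_eq hρ0.le]
    exact (convex_stdSimplex ℝ _).inter <| convex_iInter₂ fun X _ =>
      convex_halfSpace_le (isLinearMap_sum_mul X) 0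
  · rintro _ ⟨q, ⟨hq, hα⟩, rfl⟩
    exact sum_mul_le_of_alphaOf_eq_zero hρ0.le htrans hq hα X

/-- for a coherent risk measure `ρ` (monotone, translation invariant,
convex, positively homogeneous), the associated penalty `α` only takes the values `0`
and `+∞`; moreover `Q = {q ∈ M₁ : α q = 0}` is nonempty, closed and convex, it is
contained in `M₁`, and `ρ(X) = max_{q ∈ Q} ⟨q, X⟩` for every `X`. -/
theorem stmt_4 {N : ℕ} (hN : 1 ≤ N) (ρ : (Fin N → ℝ) → ℝ)
    (hmono : ∀ X Y : Fin N → ℝ, X ≤ Y → ρ X ≤ ρ Y)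
    (htrans : ∀ (X : Fin N → ℝ) (m : ℝ), ρ (X + fun _ => m) = ρ X + m)
    (hconv : ∀ X Y : Fin N → ℝ, ∀ t : ℝ, 0 < t → t < 1 →
      ρ (t • X + (1 - t) • Y) ≤ t * ρ X + (1 - t) * ρ Y)
    (hhom : ∀ (X : Fin N → ℝ) (t : ℝ), 0 ≤ t → ρ (t • X) = t * ρ X) :
    (∀ q : Fin N → ℝ, alphaOf ρ q = 0 ∨ alphaOf ρ q = ⊤) ∧
    ({q ∈ stdSimplex ℝ (Fin N) | alphaOf ρ q = 0}.Nonempty ∧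
      IsClosed {q ∈ stdSimplex ℝ (Fin N) | alphaOf ρ q = 0} ∧
      Convex ℝ {q ∈ stdSimplex ℝ (Fin N) | alphaOf ρ q = 0} ∧
      {q ∈ stdSimplex ℝ (Fin N) | alphaOf ρ q = 0} ⊆ stdSimplex ℝ (Fin N)) ∧
    (∀ X : Fin N → ℝ,
      IsGreatest ((fun q : Fin N → ℝ => ∑ i, q i * X i) ''
        {q ∈ stdSimplex ℝ (Fin N) | alphaOf ρ q = 0}) (ρ X)) :=
  stmt_4_general ρ hmono htrans hconv hhom
end

section
/- Let φ : ℝ → [0, +∞] be a lower semicontinuous convex function with nonempty domain contained in [0, +∞) and with φ(1) = 0, let p ∈ M₁ with p_i > 0 for all i, and let λ₀ > 0. Then for every x ∈ ℝ^N, sup_{q ∈ M₁} ( ⟨q, x⟩ − λ₀ D_φ(q, p) ) = min_{μ ∈ ℝ} ( μ + λ₀ Σ_{i=1}^N p_i φ*((x_i − μ)/λ₀) ), and the minimum over μ on the right-hand side is attained. -/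
open scoped BigOperators

/-- Fenchel conjugate of `φ : ℝ → [0,+∞]`: `φ*(s) = sup_t (s·t − φ(t))`, in `EReal`. -/
noncomputable def fconj (φ : ℝ → EReal) (s : ℝ) : EReal :=
  ⨆ t : ℝ, (((s * t : ℝ)) : EReal) - φ t

/-- `φ`-divergence `D_φ(q, p) = Σ_i p_i φ(q_i / p_i)`, in `[0,+∞]` (as `EReal`). -/
noncomputable def phiDiv {N : ℕ} (φ : ℝ → EReal) (q p : Fin N → ℝ) : EReal :=
  ∑ i, ((p i : ℝ) : EReal) * φ (q i / p i)

/-!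
The primal problem maximizes the concave function `q ↦ ⟨q, x⟩ - λ₀ D_φ(q, p)` over the convex set
where `D_φ(·, p)` is finite, under the single linear constraint `∑ q = 1`. Moving the coordinates
of `q` toward those of `p` reaches the constraint with total displacement `|∑ q - 1|` and, since
`φ` is convex with minimum `φ 1 = 0`, without increasing the divergence; hence the objective
exceeds its constrained supremum `v` by at most `M |∑ q - 1|`. A one-dimensional supporting line
argument then yields a Lagrange multiplier `μ` with `⟨q, x⟩ - λ₀ D_φ(q, p) ≤ v + μ (∑ q - 1)` for
all `q`. The Lagrangian separates over the coordinates, and its coordinatewise suprema are the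
terms `λ₀ p_i φ*((x_i - μ) / λ₀)`, so the dual objective at `μ` is at most `v`. Weak duality gives
the reverse inequality at every `μ`.
-/

open Set

@[norm_cast]
theorem EReal.coe_finset_sum {ι : Type*} (s : Finset ι) (f : ι → ℝ) :
    ((∑ i ∈ s, f i : ℝ) : EReal) = ∑ i ∈ s, (f i : EReal) :=
  map_sum (⟨⟨(↑), EReal.coe_zero⟩, EReal.coe_add⟩ : ℝ →+ EReal) f s

namespace EReal

theorem add_coe_mul_iSup_le {α : Type*} {x C : EReal} {c : ℝ} (hc : 0 < c) {g : α → EReal}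
    (h : ∀ a, g a ≠ ⊥ → x + c * g a ≤ C) : x + c * ⨆ a, g a ≤ C := by
  refine add_le_of_forall_lt fun x' hx' y' hy' => ?_
  have hc' : (0 : EReal) < c := by exact_mod_cast hc
  obtain ⟨a, ha⟩ : ∃ a, y' < c * g a := by
    by_contra! hle
    refine hy'.not_ge ?_
    have hsup : ⨆ a, g a ≤ y' / c :=
      iSup_le fun a => (le_div_iff_mul_le hc' (coe_ne_top c)).2 (by rw [mul_comm]; exact hle a)
    rw [mul_comm]
    exact (le_div_iff_mul_le hc' (coe_ne_top c)).1 hsup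
  have hga : g a ≠ ⊥ := fun hbot => by simp [hbot, coe_mul_bot_of_pos hc] at ha
  exact (add_le_add hx'.le ha.le).trans (h a hga)

theorem add_sum_coe_mul_iSup_le {ι α : Type*} [Nonempty α] (s : Finset ι) {w : ι → ℝ}
    (hw : ∀ i ∈ s, 0 < w i) {f : ι → α → EReal} {x C : EReal}
    (h : ∀ t : ι → α, (∀ i ∈ s, f i (t i) ≠ ⊥) → x + ∑ i ∈ s, w i * f i (t i) ≤ C) :
    x + ∑ i ∈ s, w i * ⨆ a, f i a ≤ C := by
  classical
  induction s using Finset.induction_on generalizing x with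
  | empty => simpa using h (fun _ => Classical.arbitrary α) (by simp)
  | insert j s hj ih =>
    rw [Finset.sum_insert hj, ← add_assoc]
    refine ih (fun i hi => hw i (Finset.mem_insert_of_mem hi)) fun t ht => ?_
    rw [add_right_comm]
    refine add_coe_mul_iSup_le (hw j (Finset.mem_insert_self j s)) fun a ha => ?_
    have hupd : ∀ i ∈ s, Function.update t j a i = t i := fun i hi =>
      Function.update_of_ne (ne_of_mem_of_not_mem hi hj) a t
    have hne : ∀ i ∈ insert j s, f i (Function.update t j a i) ≠ ⊥ := by
      simp only [Finset.forall_mem_insert, Function.update_self]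
      exact ⟨ha, fun i hi => hupd i hi ▸ ht i hi⟩
    have := h (Function.update t j a) hne
    rwa [Finset.sum_insert hj, Function.update_self, Finset.sum_congr rfl
      fun i hi => by rw [hupd i hi], ← add_assoc, add_right_comm] at this

end EReal

theorem exists_mem_Icc_sum_mul_sub_eq {ι : Type*} [Fintype ι] (p q : ι → ℝ) :
    ∃ θ : ι → ℝ, (∀ i, θ i ∈ Icc (0 : ℝ) 1) ∧
      ∑ i, θ i * (p i - q i) = ∑ i, p i - ∑ i, q i ∧
      ∑ i, θ i * |p i - q i| = |∑ i, p i - ∑ i, q i| := by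
  set e := ∑ i, p i - ∑ i, q i
  set g : ι → ℝ := fun i => max (e * (p i - q i)) 0
  set G := ∑ i, g i
  have hG : e ^ 2 ≤ G := calc
    e ^ 2 = ∑ i, e * (p i - q i) := by rw [← Finset.mul_sum, Finset.sum_sub_distrib]; ring
    _ ≤ G := Finset.sum_le_sum fun i _ => le_max_left _ _
  rcases (hG.trans' (sq_nonneg e)).eq_or_lt with hG0 | hG0
  · have he : e = 0 := by nlinarith
    exact ⟨0, fun _ => ⟨le_rfl, zero_le_one⟩, by simp [he], by simp [he]⟩
  -- move, by the common fraction `e ^ 2 / G`, exactly the coordinates whose displacement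
  -- `p i - q i` has the sign of the mass gap `e`
  refine ⟨fun i => if 0 < e * (p i - q i) then e ^ 2 / G else 0, fun i => ?_, ?_, ?_⟩
  · dsimp only
    split_ifs
    · exact ⟨by positivity, div_le_one_of_le₀ hG hG0.le⟩
    · exact ⟨le_rfl, zero_le_one⟩
  · calc ∑ i, (if 0 < e * (p i - q i) then e ^ 2 / G else 0) * (p i - q i)
        = ∑ i, e / G * g i := Finset.sum_congr rfl fun i _ => by
          simp only [g]; split_ifs with h
          · rw [max_eq_left h.le]; ring
          · rw [max_eq_right (not_lt.1 h)]; ring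
      _ = e := by rw [← Finset.mul_sum]; exact div_mul_cancel₀ e hG0.ne'
  · calc ∑ i, (if 0 < e * (p i - q i) then e ^ 2 / G else 0) * |p i - q i|
        = ∑ i, |e| / G * g i := Finset.sum_congr rfl fun i _ => by
          simp only [g]; split_ifs with h
          · rw [max_eq_left h.le, ← abs_of_pos h, abs_mul, ← sq_abs e]; ring
          · rw [max_eq_right (not_lt.1 h)]; ring
      _ = |e| := by rw [← Finset.mul_sum]; exact div_mul_cancel₀ |e| hG0.ne'

theorem ConvexOn.mem_and_apply_le_of_isMinOn {D : Set ℝ} {ψ : ℝ → ℝ} (hψ : ConvexOn ℝ D ψ)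
    (hmin : IsMinOn ψ D 1) (h1 : (1 : ℝ) ∈ D) {t θ : ℝ} (ht : t ∈ D) (hθ : θ ∈ Icc (0 : ℝ) 1) :
    t + θ * (1 - t) ∈ D ∧ ψ (t + θ * (1 - t)) ≤ ψ t := by
  have hseg : t + θ * (1 - t) ∈ segment ℝ t 1 := by
    rw [segment_eq_image']
    exact ⟨θ, hθ, rfl⟩
  exact ⟨hψ.1.segment_subset ht h1 hseg,
    (hψ.le_on_segment ht h1 hseg).trans (max_le le_rfl (hmin ht))⟩

section LagrangeMultiplier

variable {E : Type*} [AddCommGroup E] [Module ℝ E] {S : Set E} {f : E → ℝ} {ℓ : E →ₗ[ℝ] ℝ}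
  {c v : ℝ}

theorem ConcaveOn.slope_le_slope_of_lt_of_lt (hf : ConcaveOn ℝ S f)
    (hv : ∀ q ∈ S, ℓ q = c → f q ≤ v) {q₁ q₂ : E} (h₁ : q₁ ∈ S) (h₂ : q₂ ∈ S)
    (hq₁ : ℓ q₁ < c) (hq₂ : c < ℓ q₂) :
    (f q₂ - v) / (ℓ q₂ - c) ≤ (v - f q₁) / (c - ℓ q₁) := by
  have hd : 0 < ℓ q₂ - ℓ q₁ := by linarith
  set a := (ℓ q₂ - c) / (ℓ q₂ - ℓ q₁)
  set b := (c - ℓ q₁) / (ℓ q₂ - ℓ q₁)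
  have hab : a + b = 1 := by rw [← add_div, div_eq_one_iff_eq hd.ne']; ring
  have hcomb : a * f q₁ + b * f q₂ ≤ v := by
    refine (hf.2 h₁ h₂ (by positivity) (by positivity) hab).trans (hv _ ?_ ?_)
    · exact hf.1 h₁ h₂ (by positivity) (by positivity) hab
    · rw [map_add, map_smul, map_smul, smul_eq_mul, smul_eq_mul]
      simp only [a, b]
      field_simp
      ring
  rw [div_le_div_iff₀ (by linarith) (by linarith)]
  have := mul_le_mul_of_nonneg_left hcomb hd.le
  simp only [a, b] at this
  field_simp at this
  nlinarith

theorem ConcaveOn.exists_lagrange_multiplier (hf : ConcaveOn ℝ S f)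
    (hv : ∀ q ∈ S, ℓ q = c → f q ≤ v) {M : ℝ} (hM : ∀ q ∈ S, f q ≤ v + M * |ℓ q - c|) :
    ∃ μ : ℝ, ∀ q ∈ S, f q ≤ v + μ * (ℓ q - c) := by
  set R : Set ℝ := insert (-M) ((fun q => (f q - v) / (ℓ q - c)) '' {q ∈ S | c < ℓ q})
  have hR : BddAbove R := by
    refine ⟨|M|, ?_⟩
    rintro r (rfl | ⟨q, ⟨hq, hcq⟩, rfl⟩)
    · exact neg_le_abs M
    · have := hM q hq
      rw [abs_of_pos (sub_pos.2 hcq)] at this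
      rw [div_le_iff₀ (sub_pos.2 hcq)]
      nlinarith [le_abs_self M]
  -- the multiplier is the largest slope on the side `c < ℓ`; concavity bounds every such slope
  -- by the slopes on the side `ℓ < c`
  refine ⟨sSup R, fun q hq => ?_⟩
  rcases lt_trichotomy (ℓ q) c with hlt | heq | hgt
  · have hpos : 0 < c - ℓ q := sub_pos.2 hlt
    have hle : sSup R ≤ (v - f q) / (c - ℓ q) := by
      refine csSup_le (insert_nonempty _ _) ?_
      rintro r (rfl | ⟨q₂, ⟨hq₂, hcq₂⟩, rfl⟩)
      · have := hM q hq
        rw [abs_of_neg (sub_neg.2 hlt)] at this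
        rw [le_div_iff₀ hpos]
        linarith
      · exact hf.slope_le_slope_of_lt_of_lt hv hq hq₂ hlt hcq₂
    rw [le_div_iff₀ hpos] at hle
    linarith
  · simpa [heq] using hv q hq heq
  · have hpos : 0 < ℓ q - c := sub_pos.2 hgt
    have := le_csSup hR (mem_insert_of_mem _ ⟨q, ⟨hq, hgt⟩, rfl⟩)
    rw [div_le_iff₀ hpos] at this
    linarith

end LagrangeMultiplier

namespace PhiDivergence

variable {ι : Type*} {D : Set ℝ} {ψ : ℝ → ℝ} {p q x : ι → ℝ} {lam0 : ℝ}

-- For `D = {t | φ t ≠ ⊤}` this is the set where `D_φ(·, p)` is finite, and there `phiDiv` is the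
-- real number `realDiv`.
def ratioDom (D : Set ℝ) (p : ι → ℝ) : Set (ι → ℝ) := {q | ∀ i, q i / p i ∈ D}

theorem nonneg_of_mem_ratioDom (hD : D ⊆ Ici 0) (hp : ∀ i, 0 < p i) (hq : q ∈ ratioDom D p)
    (i : ι) : 0 ≤ q i := by
  simpa [div_mul_cancel₀ _ (hp i).ne'] using mul_nonneg (hD (hq i)) (hp i).le

variable [Fintype ι]

noncomputable def realDiv (ψ : ℝ → ℝ) (p q : ι → ℝ) : ℝ := ∑ i, p i * ψ (q i / p i)

noncomputable def primalObj (ψ : ℝ → ℝ) (p x : ι → ℝ) (lam0 : ℝ) (q : ι → ℝ) : ℝ :=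
  ∑ i, q i * x i - lam0 * realDiv ψ p q

theorem convexOn_realDiv (hψ : ConvexOn ℝ D ψ) (hp : ∀ i, 0 ≤ p i) :
    ConvexOn ℝ (ratioDom D p) (realDiv ψ p) := by
  have hratio : ∀ {a b : ℝ} (q₁ q₂ : ι → ℝ) (i : ι),
      (a • q₁ + b • q₂) i / p i = a * (q₁ i / p i) + b * (q₂ i / p i) := by
    intro a b q₁ q₂ i
    simp only [Pi.add_apply, Pi.smul_apply, smul_eq_mul]
    ring
  refine ⟨fun q₁ h₁ q₂ h₂ a b ha hb hab i => ?_, fun q₁ h₁ q₂ h₂ a b ha hb hab => ?_⟩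
  · rw [hratio]
    exact hψ.1 (h₁ i) (h₂ i) ha hb hab
  · simp only [realDiv, smul_eq_mul, Finset.mul_sum, ← Finset.sum_add_distrib]
    refine Finset.sum_le_sum fun i _ => ?_
    rw [hratio]
    calc p i * ψ (a * (q₁ i / p i) + b * (q₂ i / p i))
        ≤ p i * (a * ψ (q₁ i / p i) + b * ψ (q₂ i / p i)) :=
          mul_le_mul_of_nonneg_left (hψ.2 (h₁ i) (h₂ i) ha hb hab) (hp i)
      _ = _ := by ring

theorem concaveOn_primalObj (hψ : ConvexOn ℝ D ψ) (hp : ∀ i, 0 ≤ p i) (hlam0 : 0 ≤ lam0) :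
    ConcaveOn ℝ (ratioDom D p) (primalObj ψ p x lam0) := by
  have hobj : primalObj ψ p x lam0 =
      ⇑(Fintype.linearCombination ℝ x) - fun q => lam0 • realDiv ψ p q := by
    ext q
    simp [primalObj, Fintype.linearCombination_apply, mul_comm]
  rw [hobj]
  exact ((Fintype.linearCombination ℝ x).concaveOn (convexOn_realDiv hψ hp).1).sub
    ((convexOn_realDiv hψ hp).smul hlam0)

theorem primalObj_le_add_mul_abs (hψ : ConvexOn ℝ D ψ) (hmin : IsMinOn ψ D 1) (h1 : (1 : ℝ) ∈ D)
    (hp : ∀ i, 0 < p i) (hpsum : ∑ i, p i = 1) (hlam0 : 0 ≤ lam0) {v M : ℝ}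
    (hM : ∀ i, |x i| ≤ M)
    (hv : ∀ q ∈ ratioDom D p, ∑ i, q i = 1 → primalObj ψ p x lam0 q ≤ v)
    (hq : q ∈ ratioDom D p) :
    primalObj ψ p x lam0 q ≤ v + M * |∑ i, q i - 1| := by
  obtain ⟨θ, hθ, hmass, hvar⟩ := exists_mem_Icc_sum_mul_sub_eq p q
  rw [hpsum, abs_sub_comm] at hvar
  set q' : ι → ℝ := fun i => q i + θ i * (p i - q i)
  have hratio : ∀ i, q' i / p i = q i / p i + θ i * (1 - q i / p i) := fun i => by
    simp only [q']
    field_simp [(hp i).ne']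
  have hmove := fun i => hψ.mem_and_apply_le_of_isMinOn hmin h1 (hq i) (hθ i)
  have hq' : q' ∈ ratioDom D p := fun i => hratio i ▸ (hmove i).1
  have hsum' : ∑ i, q' i = 1 := by
    simp only [q', Finset.sum_add_distrib, hmass, hpsum]
    ring
  have hdiv : realDiv ψ p q' ≤ realDiv ψ p q := Finset.sum_le_sum fun i _ =>
    mul_le_mul_of_nonneg_left (hratio i ▸ (hmove i).2) (hp i).le
  have hlin : ∑ i, q i * x i ≤ ∑ i, q' i * x i + M * |∑ i, q i - 1| := calc
    ∑ i, q i * x i = ∑ i, q' i * x i + ∑ i, -(θ i * (p i - q i) * x i) := by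
      rw [← Finset.sum_add_distrib]
      exact Finset.sum_congr rfl fun i _ => by ring
    _ ≤ ∑ i, q' i * x i + ∑ i, θ i * |p i - q i| * M := by
      gcongr with i
      calc -(θ i * (p i - q i) * x i) ≤ |θ i * (p i - q i) * x i| := neg_le_abs _
        _ = θ i * |p i - q i| * |x i| := by rw [abs_mul, abs_mul, abs_of_nonneg (hθ i).1]
        _ ≤ θ i * |p i - q i| * M :=
          mul_le_mul_of_nonneg_left (hM i) (mul_nonneg (hθ i).1 (abs_nonneg _))
    _ = ∑ i, q' i * x i + M * |∑ i, q i - 1| := by rw [← Finset.sum_mul, hvar, mul_comm]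
  have := hv q' hq' hsum'
  simp only [primalObj] at this ⊢
  nlinarith [mul_le_mul_of_nonneg_left hdiv hlam0]

theorem primalObj_le_of_sum_eq_one (hD : D ⊆ Ici 0) (hψ0 : ∀ t ∈ D, 0 ≤ ψ t)
    (hp : ∀ i, 0 < p i) (hlam0 : 0 ≤ lam0) {M : ℝ} (hM : ∀ i, |x i| ≤ M)
    (hq : q ∈ ratioDom D p) (hq1 : ∑ i, q i = 1) : primalObj ψ p x lam0 q ≤ M := by
  have hdiv : 0 ≤ realDiv ψ p q :=
    Finset.sum_nonneg fun i _ => mul_nonneg (hp i).le (hψ0 _ (hq i))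
  calc primalObj ψ p x lam0 q ≤ ∑ i, q i * x i :=
        sub_le_self _ (mul_nonneg hlam0 hdiv)
    _ ≤ ∑ i, q i * M := Finset.sum_le_sum fun i _ =>
        mul_le_mul_of_nonneg_left ((le_abs_self _).trans (hM i))
          (nonneg_of_mem_ratioDom hD hp hq i)
    _ = M := by rw [← Finset.sum_mul, hq1, one_mul]

theorem exists_iSup_primalObj_eq_coe (hD : D ⊆ Ici 0) (hψ0 : ∀ t ∈ D, 0 ≤ ψ t)
    (h1 : (1 : ℝ) ∈ D) (hp : ∀ i, 0 < p i) (hpsum : ∑ i, p i = 1) (hlam0 : 0 ≤ lam0) {M : ℝ}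
    (hM : ∀ i, |x i| ≤ M) :
    ∃ v : ℝ, (⨆ q ∈ {q ∈ ratioDom D p | ∑ i, q i = 1},
        ((primalObj ψ p x lam0 q : ℝ) : EReal)) = v ∧
      ∀ q ∈ ratioDom D p, ∑ i, q i = 1 → primalObj ψ p x lam0 q ≤ v := by
  set S := ⨆ q ∈ {q ∈ ratioDom D p | ∑ i, q i = 1}, ((primalObj ψ p x lam0 q : ℝ) : EReal)
  have hle : ∀ q ∈ ratioDom D p, ∑ i, q i = 1 → ((primalObj ψ p x lam0 q : ℝ) : EReal) ≤ S :=
    fun q hq hq1 => le_biSup (fun q => ((primalObj ψ p x lam0 q : ℝ) : EReal)) ⟨hq, hq1⟩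
  have hp1 : p ∈ ratioDom D p := fun i => by rwa [div_self (hp i).ne']
  have hup : S ≤ M := iSup₂_le fun q hq =>
    EReal.coe_le_coe_iff.2 (primalObj_le_of_sum_eq_one hD hψ0 hp hlam0 hM hq.1 hq.2)
  have hS : ((S.toReal : ℝ) : EReal) = S := EReal.coe_toReal
    (ne_top_of_le_ne_top (EReal.coe_ne_top M) hup)
    (ne_bot_of_le_ne_bot (EReal.coe_ne_bot _) (hle p hp1 hpsum))
  exact ⟨S.toReal, hS.symm, fun q hq hq1 => EReal.coe_le_coe_iff.1 (hS ▸ hle q hq hq1)⟩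

theorem exists_lagrange_multiplier_primalObj (hψ : ConvexOn ℝ D ψ) (hmin : IsMinOn ψ D 1)
    (h1 : (1 : ℝ) ∈ D) (hp : ∀ i, 0 < p i) (hpsum : ∑ i, p i = 1) (hlam0 : 0 ≤ lam0)
    {v M : ℝ} (hM : ∀ i, |x i| ≤ M)
    (hv : ∀ q ∈ ratioDom D p, ∑ i, q i = 1 → primalObj ψ p x lam0 q ≤ v) :
    ∃ μ : ℝ, ∀ q ∈ ratioDom D p, primalObj ψ p x lam0 q ≤ v + μ * (∑ i, q i - 1) := by
  set ℓ := Fintype.linearCombination ℝ fun _ : ι => (1 : ℝ)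
  have hℓ : ∀ q, ℓ q = ∑ i, q i := fun q => by simp [ℓ, Fintype.linearCombination_apply]
  have hconc := concaveOn_primalObj (x := x) hψ (fun i => (hp i).le) hlam0
  obtain ⟨μ, hμ⟩ := hconc.exists_lagrange_multiplier (ℓ := ℓ) (c := 1)
    (fun q hq hq1 => hv q hq ((hℓ q).symm.trans hq1)) fun q hq => by
      rw [hℓ]; exact primalObj_le_add_mul_abs hψ hmin h1 hp hpsum hlam0 hM hv hq
  exact ⟨μ, fun q hq => by simpa only [hℓ] using hμ q hq⟩

theorem primalObj_sub_mul_eq (hp : ∀ i, p i ≠ 0) (hlam0 : lam0 ≠ 0) (μ : ℝ) :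
    primalObj ψ p x lam0 q - μ * (∑ i, q i - 1) =
      μ + lam0 * ∑ i, p i * ((x i - μ) / lam0 * (q i / p i) - ψ (q i / p i)) := by
  have hterm : ∀ i, lam0 * (p i * ((x i - μ) / lam0 * (q i / p i) - ψ (q i / p i))) =
      q i * x i - μ * q i - lam0 * (p i * ψ (q i / p i)) := fun i => by
    field_simp [hp i]
  rw [Finset.mul_sum, Finset.sum_congr rfl fun i _ => hterm i]
  simp only [primalObj, realDiv, Finset.sum_sub_distrib, ← Finset.mul_sum]
  ring

variable {φ : ℝ → EReal}

theorem coe_toReal_of_ne_top (hφpos : ∀ t, 0 ≤ φ t) {t : ℝ} (ht : φ t ≠ ⊤) :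
    ((φ t).toReal : EReal) = φ t :=
  EReal.coe_toReal ht (ne_bot_of_le_ne_bot EReal.zero_ne_bot (hφpos t))

theorem apply_mul_add_mul_le_coe (hφpos : ∀ t, 0 ≤ φ t)
    (hφconv : ∀ t₁ t₂ : ℝ, ∀ u : ℝ, 0 < u → u < 1 →
      φ (u * t₁ + (1 - u) * t₂) ≤ (u : EReal) * φ t₁ + ((1 - u : ℝ) : EReal) * φ t₂)
    {t₁ t₂ a b : ℝ} (h₁ : φ t₁ ≠ ⊤) (h₂ : φ t₂ ≠ ⊤) (ha : 0 ≤ a) (hb : 0 ≤ b) (hab : a + b = 1) :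
    φ (a * t₁ + b * t₂) ≤ ((a * (φ t₁).toReal + b * (φ t₂).toReal : ℝ) : EReal) := by
  obtain rfl : b = 1 - a := by linarith
  rcases ha.eq_or_lt with rfl | ha'
  · simp [coe_toReal_of_ne_top hφpos h₂]
  rcases hb.eq_or_lt with hb0 | hb'
  · obtain rfl : a = 1 := by linarith
    simp [coe_toReal_of_ne_top hφpos h₁]
  refine (hφconv t₁ t₂ a ha' (by linarith)).trans_eq ?_
  rw [EReal.coe_add, EReal.coe_mul, EReal.coe_mul, coe_toReal_of_ne_top hφpos h₁,
    coe_toReal_of_ne_top hφpos h₂]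

theorem convexOn_toReal (hφpos : ∀ t, 0 ≤ φ t)
    (hφconv : ∀ t₁ t₂ : ℝ, ∀ u : ℝ, 0 < u → u < 1 →
      φ (u * t₁ + (1 - u) * t₂) ≤ (u : EReal) * φ t₁ + ((1 - u : ℝ) : EReal) * φ t₂) :
    ConvexOn ℝ {t | φ t ≠ ⊤} fun t => (φ t).toReal := by
  refine ⟨fun t₁ h₁ t₂ h₂ a b ha hb hab => ?_, fun t₁ h₁ t₂ h₂ a b ha hb hab => ?_⟩
  · exact ne_top_of_le_ne_top (EReal.coe_ne_top _)
      (apply_mul_add_mul_le_coe hφpos hφconv h₁ h₂ ha hb hab)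
  · exact (EReal.toReal_le_toReal (apply_mul_add_mul_le_coe hφpos hφconv h₁ h₂ ha hb hab)
      (ne_bot_of_le_ne_bot EReal.zero_ne_bot (hφpos _)) (EReal.coe_ne_top _)).trans_eq
      (EReal.toReal_coe _)

theorem phiDiv_eq_coe_realDiv {N : ℕ} {p q : Fin N → ℝ} (hφpos : ∀ t, 0 ≤ φ t)
    (hq : q ∈ ratioDom {t | φ t ≠ ⊤} p) :
    phiDiv φ q p = ((realDiv (fun t => (φ t).toReal) p q : ℝ) : EReal) := by
  simp only [phiDiv, realDiv, EReal.coe_finset_sum, EReal.coe_mul,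
    coe_toReal_of_ne_top hφpos (hq _)]

theorem phiDiv_eq_top {N : ℕ} {p q : Fin N → ℝ} (hφpos : ∀ t, 0 ≤ φ t) (hp : ∀ i, 0 < p i)
    (hq : q ∉ ratioDom {t | φ t ≠ ⊤} p) : phiDiv φ q p = ⊤ := by
  obtain ⟨i, hi⟩ : ∃ i, φ (q i / p i) = ⊤ := by simpa [ratioDom] using hq
  refine top_le_iff.1 ?_
  calc ⊤ = ((p i : ℝ) : EReal) * φ (q i / p i) := by rw [hi, EReal.coe_mul_top_of_pos (hp i)]
    _ ≤ phiDiv φ q p :=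
      Finset.single_le_sum (f := fun j => ((p j : ℝ) : EReal) * φ (q j / p j))
      (fun j _ => mul_nonneg (EReal.coe_nonneg.2 (hp j).le) (hφpos _)) (Finset.mem_univ i)

theorem iSup_stdSimplex_eq_iSup_primalObj {N : ℕ} {p x : Fin N → ℝ} (hφpos : ∀ t, 0 ≤ φ t)
    (hφdom_sub : {t : ℝ | φ t ≠ ⊤} ⊆ Ici (0 : ℝ)) (hp : ∀ i, 0 < p i) (hlam0 : 0 < lam0) :
    (⨆ q ∈ stdSimplex ℝ (Fin N),
        (((∑ i, q i * x i : ℝ)) : EReal) - ((lam0 : ℝ) : EReal) * phiDiv φ q p) =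
      ⨆ q ∈ {q ∈ ratioDom {t | φ t ≠ ⊤} p | ∑ i, q i = 1},
        ((primalObj (fun t => (φ t).toReal) p x lam0 q : ℝ) : EReal) := by
  have hterm : ∀ q ∈ ratioDom {t | φ t ≠ ⊤} p,
      (((∑ i, q i * x i : ℝ)) : EReal) - ((lam0 : ℝ) : EReal) * phiDiv φ q p =
        ((primalObj (fun t => (φ t).toReal) p x lam0 q : ℝ) : EReal) := fun q hq => by
    rw [phiDiv_eq_coe_realDiv hφpos hq, ← EReal.coe_mul, ← EReal.coe_sub, primalObj]
  refine le_antisymm (iSup₂_le fun q hq => ?_) (iSup₂_le fun q hq => ?_)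
  · by_cases hd : q ∈ ratioDom {t | φ t ≠ ⊤} p
    · rw [hterm q hd]
      exact le_biSup (fun q => ((primalObj (fun t => (φ t).toReal) p x lam0 q : ℝ) : EReal))
        ⟨hd, hq.2⟩
    · rw [phiDiv_eq_top hφpos hp hd, EReal.coe_mul_top_of_pos hlam0, EReal.sub_top]
      exact bot_le
  · rw [← hterm q hq.1]
    exact le_biSup
      (fun q => (((∑ i, q i * x i : ℝ)) : EReal) - ((lam0 : ℝ) : EReal) * phiDiv φ q p)
      ⟨nonneg_of_mem_ratioDom hφdom_sub hp hq.1, hq.2⟩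

noncomputable def dualObj (φ : ℝ → EReal) (p x : ι → ℝ) (lam0 μ : ℝ) : EReal :=
  ((μ : ℝ) : EReal) + ((lam0 : ℝ) : EReal)
    * ∑ i, ((p i : ℝ) : EReal) * fconj φ ((x i - μ) / lam0)

theorem coe_lagrangian_le_dualObj (hφpos : ∀ t, 0 ≤ φ t) (hp : ∀ i, 0 < p i) (hlam0 : 0 < lam0)
    (hq : q ∈ ratioDom {t | φ t ≠ ⊤} p) (μ : ℝ) :
    ((primalObj (fun t => (φ t).toReal) p x lam0 q - μ * (∑ i, q i - 1) : ℝ) : EReal) ≤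
      dualObj φ p x lam0 μ := by
  rw [primalObj_sub_mul_eq (fun i => (hp i).ne') hlam0.ne', EReal.coe_add, EReal.coe_mul,
    EReal.coe_finset_sum]
  refine add_le_add le_rfl (mul_le_mul_of_nonneg_left (Finset.sum_le_sum fun i _ => ?_)
    (EReal.coe_nonneg.2 hlam0.le))
  rw [EReal.coe_mul, EReal.coe_sub, coe_toReal_of_ne_top hφpos (hq i)]
  exact mul_le_mul_of_nonneg_left
    (le_iSup (fun t => ((((x i - μ) / lam0 * t : ℝ)) : EReal) - φ t) (q i / p i))
    (EReal.coe_nonneg.2 (hp i).le)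

theorem dualObj_le_of_lagrangian_le (hφpos : ∀ t, 0 ≤ φ t) (hp : ∀ i, 0 < p i)
    (hlam0 : 0 < lam0) {μ v : ℝ}
    (h : ∀ q ∈ ratioDom {t | φ t ≠ ⊤} p,
      primalObj (fun t => (φ t).toReal) p x lam0 q - μ * (∑ i, q i - 1) ≤ v) :
    dualObj φ p x lam0 μ ≤ v := by
  have hsum : 0 + ∑ i, ((p i : ℝ) : EReal) * fconj φ ((x i - μ) / lam0) ≤
      (((v - μ) / lam0 : ℝ) : EReal) := by
    refine EReal.add_sum_coe_mul_iSup_le Finset.univ (fun i _ => hp i) fun t ht => ?_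
    have hfin : ∀ i, φ (t i) ≠ ⊤ := fun i htop => ht i (Finset.mem_univ i) (by simp [htop])
    have hqt : ∀ i, p i * t i / p i = t i := fun i => mul_div_cancel_left₀ _ (hp i).ne'
    have hreal := h (fun i => p i * t i) fun i => (hqt i).symm ▸ hfin i
    rw [primalObj_sub_mul_eq (fun i => (hp i).ne') hlam0.ne'] at hreal
    simp only [hqt] at hreal
    calc (0 : EReal) + ∑ i, ((p i : ℝ) : EReal) * ((((x i - μ) / lam0 * t i : ℝ)) - φ (t i))
        = ((∑ i, p i * ((x i - μ) / lam0 * t i - (φ (t i)).toReal) : ℝ) : EReal) := by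
          simp only [zero_add, EReal.coe_finset_sum, EReal.coe_mul, EReal.coe_sub,
            coe_toReal_of_ne_top hφpos (hfin _)]
      _ ≤ _ := EReal.coe_le_coe_iff.2 <| (le_div_iff₀ hlam0).2 (by linarith)
  rw [zero_add] at hsum
  calc dualObj φ p x lam0 μ
        ≤ ((μ : ℝ) : EReal) + ((lam0 : ℝ) : EReal) * (((v - μ) / lam0 : ℝ) : EReal) :=
        add_le_add le_rfl (mul_le_mul_of_nonneg_left hsum (EReal.coe_nonneg.2 hlam0.le))
    _ = v := by
        rw [← EReal.coe_mul, ← EReal.coe_add, mul_div_cancel₀ _ hlam0.ne', add_sub_cancel]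

theorem iSup_primalObj_le_dualObj (hφpos : ∀ t, 0 ≤ φ t) (hp : ∀ i, 0 < p i) (hlam0 : 0 < lam0)
    (μ : ℝ) :
    (⨆ q ∈ {q ∈ ratioDom {t | φ t ≠ ⊤} p | ∑ i, q i = 1},
        ((primalObj (fun t => (φ t).toReal) p x lam0 q : ℝ) : EReal)) ≤ dualObj φ p x lam0 μ :=
  iSup₂_le fun q hq => by simpa [hq.2] using coe_lagrangian_le_dualObj hφpos hp hlam0 hq.1 μ

end PhiDivergence

open PhiDivergence in
theorem stmt_10_general {N : ℕ} (φ : ℝ → EReal)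
    (hφpos : ∀ t, 0 ≤ φ t)
    (hφconv : ∀ t₁ t₂ : ℝ, ∀ u : ℝ, 0 < u → u < 1 →
      φ (u * t₁ + (1 - u) * t₂) ≤ (u : EReal) * φ t₁ + ((1 - u : ℝ) : EReal) * φ t₂)
    (hφdom_sub : {t : ℝ | φ t ≠ ⊤} ⊆ Set.Ici (0 : ℝ))
    (hφ1 : φ 1 = 0)
    (p : Fin N → ℝ) (hp : p ∈ stdSimplex ℝ (Fin N)) (hppos : ∀ i, 0 < p i)
    (lam0 : ℝ) (hlam0 : 0 < lam0) (x : Fin N → ℝ) :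
    IsLeast
      (Set.range (fun μ : ℝ =>
        ((μ : ℝ) : EReal) + ((lam0 : ℝ) : EReal)
          * ∑ i, ((p i : ℝ) : EReal) * fconj φ ((x i - μ) / lam0)))
      (⨆ q ∈ stdSimplex ℝ (Fin N),
        (((∑ i, q i * x i : ℝ)) : EReal) - ((lam0 : ℝ) : EReal) * phiDiv φ q p) := by
  have hψ0 : ∀ t ∈ {t | φ t ≠ ⊤}, 0 ≤ (φ t).toReal := fun t _ => EReal.toReal_nonneg (hφpos t)
  have h1 : (1 : ℝ) ∈ {t | φ t ≠ ⊤} := by simp [hφ1]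
  have hmin : IsMinOn (fun t => (φ t).toReal) {t | φ t ≠ ⊤} 1 := fun t ht => by
    simpa [hφ1] using hψ0 t ht
  have hM : ∀ i, |x i| ≤ ∑ j, |x j| := fun i =>
    Finset.single_le_sum (fun j _ => abs_nonneg (x j)) (Finset.mem_univ i)
  obtain ⟨v, hv, hle⟩ := exists_iSup_primalObj_eq_coe hφdom_sub hψ0 h1 hppos hp.2 hlam0.le hM
  obtain ⟨μ, hμ⟩ := exists_lagrange_multiplier_primalObj (convexOn_toReal hφpos hφconv) hmin h1
    hppos hp.2 hlam0.le hM hle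
  have hweak : ∀ μ', (v : EReal) ≤ dualObj φ p x lam0 μ' := fun μ' =>
    hv ▸ iSup_primalObj_le_dualObj hφpos hppos hlam0 μ'
  rw [iSup_stdSimplex_eq_iSup_primalObj hφpos hφdom_sub hppos hlam0, hv]
  refine ⟨⟨μ, le_antisymm ?_ (hweak μ)⟩, fun _ ⟨μ', hμ'⟩ => hμ' ▸ hweak μ'⟩
  exact dualObj_le_of_lagrangian_le hφpos hppos hlam0 fun q hq => by linarith [hμ q hq]

/-- for a lsc convex `φ : ℝ → [0,+∞]` with nonempty domain contained in
`[0,+∞)` and `φ(1) = 0`, `p ∈ M₁` with all `p_i > 0`, and `λ₀ > 0`, for every `x ∈ ℝ^N`: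
`sup_{q ∈ M₁} (⟨q,x⟩ − λ₀ D_φ(q,p)) = min_μ (μ + λ₀ Σ_i p_i φ*((x_i − μ)/λ₀))`,
the minimum over `μ` being attained (`IsLeast` of the range of the dual objective). -/
theorem stmt_10 {N : ℕ} (hN : 1 ≤ N) (φ : ℝ → EReal)
    (hφpos : ∀ t, 0 ≤ φ t)
    (hφlsc : LowerSemicontinuous φ)
    (hφconv : ∀ t₁ t₂ : ℝ, ∀ u : ℝ, 0 < u → u < 1 →
      φ (u * t₁ + (1 - u) * t₂) ≤ (u : EReal) * φ t₁ + ((1 - u : ℝ) : EReal) * φ t₂)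
    (hφdom_ne : {t : ℝ | φ t ≠ ⊤}.Nonempty)
    (hφdom_sub : {t : ℝ | φ t ≠ ⊤} ⊆ Set.Ici (0 : ℝ))
    (hφ1 : φ 1 = 0)
    (p : Fin N → ℝ) (hp : p ∈ stdSimplex ℝ (Fin N)) (hppos : ∀ i, 0 < p i)
    (lam0 : ℝ) (hlam0 : 0 < lam0) (x : Fin N → ℝ) :
    IsLeast
      (Set.range (fun μ : ℝ =>
        ((μ : ℝ) : EReal) + ((lam0 : ℝ) : EReal)
          * ∑ i, ((p i : ℝ) : EReal) * fconj φ ((x i - μ) / lam0)))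
      (⨆ q ∈ stdSimplex ℝ (Fin N),
        (((∑ i, q i * x i : ℝ)) : EReal) - ((lam0 : ℝ) : EReal) * phiDiv φ q p) :=
  stmt_10_general φ hφpos hφconv hφdom_sub hφ1 p hp hppos lam0 hlam0 x
end

section
/- Let φ : ℝ → [0, +∞] be a lower semicontinuous convex function with φ(1) = 0 whose domain equals (0, +∞) or [0, +∞), let p ∈ M₁ with p_i > 0 for all i, and let ε > 0. Define ψ : [0, +∞) × ℝ → ℝ ∪ {+∞} by ψ(λ, t) = λ φ*(t/λ) for λ > 0, and ψ(0, t) = 0 if t ≤ 0, ψ(0, t) = +∞ if t > 0. Then for every x ∈ ℝ^N, sup{ ⟨q, x⟩ : q ∈ M₁, D_φ(q, p) ≤ ε } = min over λ ≥ 0 and μ ∈ ℝ of ( λ ε + μ + Σ_{i=1}^N p_i ψ(λ, x_i − μ) ), and the minimum over (λ, μ) on the right-hand side is attained. -/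
open scoped BigOperators
open Classical

/-- `ψ(λ, t) = λ φ*(t/λ)` for `λ > 0`, and `ψ(0, t) = 0` if `t ≤ 0`, `+∞` if `t > 0`. -/
noncomputable def psiPersp (φ : ℝ → EReal) (l t : ℝ) : EReal :=
  if 0 < l then ((l : ℝ) : EReal) * fconj φ (t / l)
  else if t ≤ 0 then 0 else ⊤

/-!
Weak duality is the Fenchel–Young inequality `s t ≤ ψ(λ, t) + λ φ(s)` integrated against `p`.
Conversely `ψ(λ, t) = sup_{s ∈ dom φ} (s t - λ φ(s))`, also for `λ = 0` because
`(0, ∞) ⊆ dom φ ⊆ [0, ∞)`, so the dual objective is the supremum of the Lagrangian over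
nonnegative `q`. The triples (divergence budget, total mass, objective value) attained by
nonnegative `q` of finite divergence form a convex set. It contains `(ε, 1, ⟨p, x⟩ - 1)` in its
interior, since `φ` is convex, hence continuous, near `1` where it vanishes, while
`(ε, 1, S)`, `S` the primal value, is not an interior point. A hyperplane supporting the set
at `(ε, 1, S)` has positive last coefficient; normalised, its first two coefficients are
`-λ` and `-μ` for an optimal dual pair, which bounds the Lagrangian by `S - μ - λ ε`.
-/

namespace EReal

theorem coe_finset_sum_s12 {ι : Type*} (s : Finset ι) (f : ι → ℝ) :
    ((∑ i ∈ s, f i : ℝ) : EReal) = ∑ i ∈ s, (f i : EReal) :=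
  map_sum (⟨⟨((↑) : ℝ → EReal), coe_zero⟩, coe_add⟩ : ℝ →+ EReal) f s

theorem finset_sum_le_coe_of_forall_lt {ι : Type*} [DecidableEq ι] (s : Finset ι)
    (a : ι → EReal) (c : ℝ)
    (h : ∀ b : ι → ℝ, (∀ i ∈ s, (b i : EReal) < a i) → ∑ i ∈ s, b i ≤ c) :
    ∑ i ∈ s, a i ≤ c := by
  induction s using Finset.induction_on generalizing c with
  | empty => simpa using h 0 (by simp)
  | insert j s hj ih =>
    rw [Finset.sum_insert hj]
    refine add_le_of_forall_lt fun a' ha' b' hb' => ?_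
    induction a' using EReal.rec with
    | bot => simp
    | top => exact absurd ha' not_top_lt
    | coe r =>
      have hs : ∑ i ∈ s, a i ≤ ((c - r : ℝ) : EReal) := by
        refine ih _ fun b hb => ?_
        have hupd := h (Function.update b j r) fun i hi => by
          rcases Finset.mem_insert.1 hi with rfl | hi
          · simpa using ha'
          · rw [Function.update_of_ne (ne_of_mem_of_not_mem hi hj)]
            exact hb i hi
        rw [Finset.sum_insert hj, Function.update_self,
          Finset.sum_congr rfl fun i hi => Function.update_of_ne (ne_of_mem_of_not_mem hi hj) _ _]
          at hupd
        linarith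
      calc (r : EReal) + b' ≤ r + ((c - r : ℝ) : EReal) := by gcongr; exact (hb'.trans_le hs).le
        _ = c := by rw [← coe_add, add_sub_cancel]

end EReal

open Filter Topology

section Conjugate

variable {φ : ℝ → EReal}

theorem coe_toReal_phi (hφpos : ∀ t, 0 ≤ φ t) {s : ℝ} (hs : φ s ≠ ⊤) :
    ((φ s).toReal : EReal) = φ s :=
  EReal.coe_toReal hs (EReal.bot_lt_zero.trans_le (hφpos s)).ne'

theorem coe_le_psiPersp {l s t r : ℝ} (hl : 0 ≤ l) (hs : 0 ≤ s) (hφs : φ s = r) :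
    ((s * t - l * r : ℝ) : EReal) ≤ psiPersp φ l t := by
  unfold psiPersp
  split_ifs with hl' ht
  · have hle : (((t / l) * s - r : ℝ) : EReal) ≤ fconj φ (t / l) :=
      le_iSup_of_le s (by rw [hφs, EReal.coe_sub])
    calc ((s * t - l * r : ℝ) : EReal) = (l : EReal) * (((t / l) * s - r : ℝ) : EReal) := by
          rw [← EReal.coe_mul]; congr 1; field_simp
      _ ≤ (l : EReal) * fconj φ (t / l) := mul_le_mul_of_nonneg_left hle (by exact_mod_cast hl)
  · obtain rfl : l = 0 := le_antisymm (not_lt.1 hl') hl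
    exact_mod_cast (by nlinarith : s * t - 0 * r ≤ 0)
  · exact le_top

theorem exists_lt_of_coe_lt_psiPersp (hφpos : ∀ t, 0 ≤ φ t)
    (hφIoi : Set.Ioi 0 ⊆ {t | φ t ≠ ⊤}) (hφIci : {t | φ t ≠ ⊤} ⊆ Set.Ici 0)
    {l t b : ℝ} (hl : 0 ≤ l) (hb : (b : EReal) < psiPersp φ l t) :
    ∃ s, 0 ≤ s ∧ φ s ≠ ⊤ ∧ b < s * t - l * (φ s).toReal := by
  unfold psiPersp at hb
  split_ifs at hb with hl' ht
  · have hbl : ((b / l : ℝ) : EReal) < fconj φ (t / l) := by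
      refine lt_of_mul_lt_mul_left ?_ (show (0 : EReal) ≤ l by exact_mod_cast hl)
      rwa [← EReal.coe_mul, mul_div_cancel₀ _ hl'.ne']
    obtain ⟨s, hs⟩ := lt_iSup_iff.1 hbl
    have hφs : φ s ≠ ⊤ := fun h => by simp [h] at hs
    rw [← coe_toReal_phi hφpos hφs, ← EReal.coe_sub, EReal.coe_lt_coe_iff, div_lt_iff₀ hl'] at hs
    refine ⟨s, hφIci hφs, hφs, ?_⟩
    calc b < (t / l * s - (φ s).toReal) * l := hs
      _ = s * t - l * (φ s).toReal := by field_simp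
  · obtain rfl : l = 0 := le_antisymm (not_lt.1 hl') hl
    have hb0 : b < 0 := by exact_mod_cast hb
    have hev : ∀ᶠ s in 𝓝[>] (0 : ℝ), b < s * t ∧ 0 < s :=
      ((((continuous_id.mul continuous_const).tendsto' 0 0 (by simp)).eventually
        (lt_mem_nhds hb0)).filter_mono nhdsWithin_le_nhds).and self_mem_nhdsWithin
    obtain ⟨s, hst, hs⟩ := hev.exists
    exact ⟨s, hs.le, hφIoi hs, by simpa using hst⟩
  · obtain rfl : l = 0 := le_antisymm (not_lt.1 hl') hl
    have ht : 0 < t := not_le.1 ht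
    have hs : 0 < (|b| + 1) / t := by positivity
    refine ⟨(|b| + 1) / t, hs.le, hφIoi hs, ?_⟩
    rw [zero_mul, sub_zero, div_mul_cancel₀ _ ht.ne']
    linarith [le_abs_self b]

end Conjugate

theorem Convex.exists_lt_and_forall_le_of_notMem_interior {E : Type*} [TopologicalSpace E]
    [AddCommGroup E] [Module ℝ E] [IsTopologicalAddGroup E] [ContinuousSMul ℝ E] {C : Set E}
    (hC : Convex ℝ C) {x z : E} (hz : z ∈ interior C) (hx : x ∉ interior C) :
    ∃ f : StrongDual ℝ E, f z < f x ∧ ∀ y ∈ C, f y ≤ f x := by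
  obtain ⟨f, hf⟩ := geometric_hahn_banach_open_point hC.interior isOpen_interior hx
  refine ⟨f, hf z hz, fun y hy => ?_⟩
  have hy' : y ∈ closure (interior C) := by
    rw [hC.closure_interior_eq_closure_of_nonempty_interior ⟨z, hz⟩]
    exact subset_closure hy
  exact closure_minimal (fun a ha => (hf a ha).le) (isClosed_le f.continuous continuous_const) hy'

section Divergence

variable {N : ℕ} {φ : ℝ → EReal} {p : Fin N → ℝ}

theorem convexOn_toReal (hφpos : ∀ t, 0 ≤ φ t)
    (hφconv : ∀ t₁ t₂ : ℝ, ∀ u : ℝ, 0 < u → u < 1 →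
      φ (u * t₁ + (1 - u) * t₂) ≤ (u : EReal) * φ t₁ + ((1 - u : ℝ) : EReal) * φ t₂) :
    ConvexOn ℝ {t | φ t ≠ ⊤} fun t => (φ t).toReal := by
  have key : ∀ ⦃s⦄, φ s ≠ ⊤ → ∀ ⦃s'⦄, φ s' ≠ ⊤ → ∀ ⦃a b : ℝ⦄, 0 ≤ a → 0 ≤ b → a + b = 1 →
      φ (a • s + b • s') ≤ ((a * (φ s).toReal + b * (φ s').toReal : ℝ) : EReal) := by
    intro s hs s' hs' a b ha hb hab
    obtain rfl : b = 1 - a := by linarith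
    rcases ha.eq_or_lt with rfl | ha'
    · simp [coe_toReal_phi hφpos hs']
    rcases hb.eq_or_lt with hb0 | hb'
    · obtain rfl : a = 1 := by linarith
      simp [coe_toReal_phi hφpos hs]
    · simpa [EReal.coe_add, EReal.coe_mul, coe_toReal_phi hφpos hs, coe_toReal_phi hφpos hs']
        using hφconv s s' a ha' (by linarith)
  refine ⟨fun s hs s' hs' a b ha hb hab =>
    ne_top_of_le_ne_top (EReal.coe_ne_top _) (key hs hs' ha hb hab),
    fun s hs s' hs' a b ha hb hab => ?_⟩
  have h := key hs hs' ha hb hab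
  rwa [← coe_toReal_phi hφpos (ne_top_of_le_ne_top (EReal.coe_ne_top _) h),
    EReal.coe_le_coe_iff] at h

-- Only meaningful when every `φ (q i / p i)` is finite: `EReal.toReal ⊤ = 0`.
noncomputable def phiDivReal (φ : ℝ → EReal) (q p : Fin N → ℝ) : ℝ :=
  ∑ i, p i * (φ (q i / p i)).toReal

theorem phiDiv_eq_coe_phiDivReal (hφpos : ∀ t, 0 ≤ φ t) {q : Fin N → ℝ}
    (hq : ∀ i, φ (q i / p i) ≠ ⊤) : phiDiv φ q p = phiDivReal φ q p := by
  rw [phiDiv, phiDivReal, EReal.coe_finset_sum_s12]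
  exact Finset.sum_congr rfl fun i _ => by rw [EReal.coe_mul, coe_toReal_phi hφpos (hq i)]

theorem phiDiv_le_coe_iff (hφpos : ∀ t, 0 ≤ φ t) (hp : ∀ i, 0 < p i) {q : Fin N → ℝ} {d : ℝ} :
    phiDiv φ q p ≤ d ↔ (∀ i, φ (q i / p i) ≠ ⊤) ∧ phiDivReal φ q p ≤ d := by
  refine ⟨fun h => ?_, fun ⟨hq, hd⟩ => by
    rw [phiDiv_eq_coe_phiDivReal hφpos hq]; exact_mod_cast hd⟩
  have hq : ∀ i, φ (q i / p i) ≠ ⊤ := by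
    intro i hi
    have htop : (⊤ : EReal) ≤ phiDiv φ q p := by
      rw [← EReal.coe_mul_top_of_pos (hp i), ← hi]
      exact Finset.single_le_sum (f := fun i => (p i : EReal) * φ (q i / p i))
        (fun j _ => mul_nonneg (by exact_mod_cast (hp j).le) (hφpos _)) (Finset.mem_univ i)
    exact EReal.coe_ne_top d (top_le_iff.1 (htop.trans h))
  rw [phiDiv_eq_coe_phiDivReal hφpos hq, EReal.coe_le_coe_iff] at h
  exact ⟨hq, h⟩

theorem phiDiv_self (hφ1 : φ 1 = 0) (hp : ∀ i, 0 < p i) : phiDiv φ p p = 0 := by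
  simp [phiDiv, div_self (hp _).ne', hφ1]

theorem coe_lagrangian_le_sum_psiPersp (hφpos : ∀ t, 0 ≤ φ t) (hp : ∀ i, 0 < p i) {l : ℝ}
    (hl : 0 ≤ l) (t q : Fin N → ℝ) (hq0 : ∀ i, 0 ≤ q i) (hq : ∀ i, φ (q i / p i) ≠ ⊤) :
    ((∑ i, q i * t i - l * phiDivReal φ q p : ℝ) : EReal) ≤
      ∑ i, (p i : EReal) * psiPersp φ l (t i) := by
  rw [phiDivReal, Finset.mul_sum, ← Finset.sum_sub_distrib, EReal.coe_finset_sum_s12]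
  refine Finset.sum_le_sum fun i _ => ?_
  have hFY := coe_le_psiPersp (t := t i) hl (div_nonneg (hq0 i) (hp i).le)
    (coe_toReal_phi hφpos (hq i)).symm
  calc ((q i * t i - l * (p i * (φ (q i / p i)).toReal) : ℝ) : EReal)
      = (p i : EReal) * ((q i / p i * t i - l * (φ (q i / p i)).toReal : ℝ) : EReal) := by
        have := (hp i).ne'
        rw [← EReal.coe_mul]; congr 1; field_simp
    _ ≤ _ := mul_le_mul_of_nonneg_left hFY (by exact_mod_cast (hp i).le)

theorem sum_psiPersp_le_of_lagrangian_le (hφpos : ∀ t, 0 ≤ φ t)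
    (hφIoi : Set.Ioi 0 ⊆ {t | φ t ≠ ⊤}) (hφIci : {t | φ t ≠ ⊤} ⊆ Set.Ici 0)
    (hp : ∀ i, 0 < p i) {l : ℝ} (hl : 0 ≤ l) (t : Fin N → ℝ) {c : ℝ}
    (h : ∀ q : Fin N → ℝ, (∀ i, 0 ≤ q i) → (∀ i, φ (q i / p i) ≠ ⊤) →
      ∑ i, q i * t i - l * phiDivReal φ q p ≤ c) :
    ∑ i, (p i : EReal) * psiPersp φ l (t i) ≤ c := by
  refine EReal.finset_sum_le_coe_of_forall_lt _ _ _ fun b hb => ?_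
  have hex : ∀ i, ∃ s, 0 ≤ s ∧ φ s ≠ ⊤ ∧ b i / p i < s * t i - l * (φ s).toReal := by
    refine fun i => exists_lt_of_coe_lt_psiPersp hφpos hφIoi hφIci hl
      (lt_of_mul_lt_mul_left ?_ (show (0 : EReal) ≤ p i by exact_mod_cast (hp i).le))
    rw [← EReal.coe_mul, mul_div_cancel₀ _ (hp i).ne']
    exact hb i (Finset.mem_univ i)
  choose s hs0 hsfin hsb using hex
  have hq : ∀ i, p i * s i / p i = s i := fun i => mul_div_cancel_left₀ _ (hp i).ne'
  calc ∑ i, b i ≤ ∑ i, (p i * s i * t i - l * (p i * (φ (s i)).toReal)) :=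
        Finset.sum_le_sum fun i _ => by
          have := (div_lt_iff₀' (hp i)).1 (hsb i)
          linarith
    _ = ∑ i, p i * s i * t i - l * phiDivReal φ (fun i => p i * s i) p := by
        simp only [phiDivReal, hq, Finset.mul_sum, Finset.sum_sub_distrib]
    _ ≤ c := h _ (fun i => mul_nonneg (hp i).le (hs0 i)) fun i => by rw [hq]; exact hsfin i

end Divergence

section Duality

variable {N : ℕ} {φ : ℝ → EReal} {p : Fin N → ℝ}

def attainableSet (φ : ℝ → EReal) (p x : Fin N → ℝ) : Set (ℝ × ℝ × ℝ) :=
  {z | ∃ q : Fin N → ℝ, (∀ i, 0 ≤ q i) ∧ (∀ i, φ (q i / p i) ≠ ⊤) ∧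
    phiDivReal φ q p ≤ z.1 ∧ ∑ i, q i = z.2.1 ∧ z.2.2 ≤ ∑ i, q i * x i}

theorem convex_attainableSet (hφ : ConvexOn ℝ {t | φ t ≠ ⊤} fun t => (φ t).toReal)
    (hp : ∀ i, 0 < p i) (x : Fin N → ℝ) : Convex ℝ (attainableSet φ p x) := by
  rintro ⟨d, m, v⟩ ⟨q, hq0, hqfin, hqd, hqm, hqv⟩ ⟨d', m', v'⟩ ⟨q', hq0', hqfin', hqd', hqm', hqv'⟩
    a b ha hb hab
  have harg : ∀ i, (a * q i + b * q' i) / p i = a • (q i / p i) + b • (q' i / p i) := fun i => by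
    simp only [smul_eq_mul]; ring
  refine ⟨fun i => a * q i + b * q' i, fun i => by have := hq0 i; have := hq0' i; positivity,
    fun i => by rw [harg]; exact hφ.1 (hqfin i) (hqfin' i) ha hb hab, ?_, ?_, ?_⟩
  · calc phiDivReal φ (fun i => a * q i + b * q' i) p
        ≤ ∑ i, p i * (a * (φ (q i / p i)).toReal + b * (φ (q' i / p i)).toReal) :=
          Finset.sum_le_sum fun i _ => mul_le_mul_of_nonneg_left
            (by rw [harg]; exact hφ.2 (hqfin i) (hqfin' i) ha hb hab) (hp i).le
      _ = a * phiDivReal φ q p + b * phiDivReal φ q' p := by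
          simp only [phiDivReal, Finset.mul_sum, ← Finset.sum_add_distrib]
          exact Finset.sum_congr rfl fun i _ => by ring
      _ ≤ a * d + b * d' := by gcongr
  · simp [Finset.sum_add_distrib, ← Finset.mul_sum, hqm, hqm']
  · calc a * v + b * v' ≤ a * ∑ i, q i * x i + b * ∑ i, q' i * x i := by gcongr
      _ = ∑ i, (a * q i + b * q' i) * x i := by
          simp only [Finset.mul_sum, ← Finset.sum_add_distrib]
          exact Finset.sum_congr rfl fun i _ => by ring

theorem mem_attainableSet_of_smul (hφIoi : Set.Ioi 0 ⊆ {t | φ t ≠ ⊤}) (hp : ∀ i, 0 < p i)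
    (hp1 : ∑ i, p i = 1) (x : Fin N → ℝ) {d m v : ℝ} (hm : 0 < m) (hd : (φ m).toReal ≤ d)
    (hv : v ≤ m * ∑ i, p i * x i) : (d, m, v) ∈ attainableSet φ p x := by
  have hq : ∀ i, m * p i / p i = m := fun i => mul_div_cancel_right₀ _ (hp i).ne'
  refine ⟨fun i => m * p i, fun i => by have := hp i; positivity, fun i => by
    rw [hq]; exact hφIoi hm, ?_, ?_, ?_⟩
  · simpa [phiDivReal, hq, ← Finset.sum_mul, hp1] using hd
  · simp [← Finset.mul_sum, hp1]
  · simpa [Finset.mul_sum, mul_assoc] using hv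

theorem mem_interior_attainableSet (hφ : ConvexOn ℝ {t | φ t ≠ ⊤} fun t => (φ t).toReal)
    (hφIoi : Set.Ioi 0 ⊆ {t | φ t ≠ ⊤}) (hφ1 : φ 1 = 0) (hp : ∀ i, 0 < p i)
    (hp1 : ∑ i, p i = 1) (x : Fin N → ℝ) {d v : ℝ} (hd : 0 < d) (hv : v < ∑ i, p i * x i) :
    (d, 1, v) ∈ interior (attainableSet φ p x) := by
  have hcont : ContinuousAt (fun t => (φ t).toReal) 1 := hφ.continuousOn_interior.continuousAt
    (interior_mem_nhds.2 (Filter.mem_of_superset (Ioi_mem_nhds one_pos) hφIoi))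
  rw [mem_interior_iff_mem_nhds]
  filter_upwards [continuousAt_const.eventually_lt continuousAt_snd.fst one_pos,
    (hcont.comp_of_eq continuousAt_snd.fst rfl).eventually_lt continuousAt_fst
      (by simpa [hφ1] using hd),
    continuousAt_snd.snd.eventually_lt (continuousAt_snd.fst.mul continuousAt_const)
      (by simpa using hv)] with z hm hd hv
  exact mem_attainableSet_of_smul hφIoi hp hp1 x hm hd.le hv.le

theorem notMem_interior_attainableSet (hφpos : ∀ t, 0 ≤ φ t) (hp : ∀ i, 0 < p i)
    (x : Fin N → ℝ) {ε s : ℝ}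
    (hs : ∀ q ∈ stdSimplex ℝ (Fin N), phiDiv φ q p ≤ ε → ∑ i, q i * x i ≤ s) :
    (ε, 1, s) ∉ interior (attainableSet φ p x) := by
  intro h
  have hev : ∀ᶠ t in 𝓝[>] (0 : ℝ), (ε, 1, s + t) ∈ attainableSet φ p x ∧ 0 < t :=
    ((((by fun_prop : Continuous fun t : ℝ => (ε, (1 : ℝ), s + t)).tendsto' 0 _
      (by simp)).eventually (mem_interior_iff_mem_nhds.1 h)).filter_mono
        nhdsWithin_le_nhds).and self_mem_nhdsWithin
  obtain ⟨t, ⟨q, hq0, hqfin, hqd, hq1, hqx⟩, ht⟩ := hev.exists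
  have := hs q ⟨hq0, hq1⟩ ((phiDiv_le_coe_iff hφpos hp).2 ⟨hqfin, hqd⟩)
  dsimp only at hqx
  linarith

noncomputable def dualObjective (φ : ℝ → EReal) (p x : Fin N → ℝ) (ε l μ : ℝ) : EReal :=
  ((l * ε + μ : ℝ) : EReal) + ∑ i, ((p i : ℝ) : EReal) * psiPersp φ l (x i - μ)

theorem dualObjective_zero_of_forall_le {x : Fin N → ℝ} {μ : ℝ} (hμ : ∀ i, x i ≤ μ) (ε : ℝ) :
    dualObjective φ p x ε 0 μ = μ := by
  simp [dualObjective, psiPersp, hμ]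

theorem coe_sum_mul_le_dualObjective (hφpos : ∀ t, 0 ≤ φ t) (hp : ∀ i, 0 < p i)
    {q : Fin N → ℝ} (hq : q ∈ stdSimplex ℝ (Fin N)) {ε : ℝ} (hqε : phiDiv φ q p ≤ ε)
    (x : Fin N → ℝ) {l : ℝ} (hl : 0 ≤ l) (μ : ℝ) :
    ((∑ i, q i * x i : ℝ) : EReal) ≤ dualObjective φ p x ε l μ := by
  obtain ⟨hqfin, hqd⟩ := (phiDiv_le_coe_iff hφpos hp).1 hqε
  have hsum : ∑ i, q i * (x i - μ) = ∑ i, q i * x i - μ := by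
    simp [mul_sub, Finset.sum_sub_distrib, ← Finset.sum_mul, hq.2]
  calc ((∑ i, q i * x i : ℝ) : EReal)
      ≤ ((l * ε + μ : ℝ) : EReal) +
          ((∑ i, q i * (x i - μ) - l * phiDivReal φ q p : ℝ) : EReal) := by
        rw [← EReal.coe_add, EReal.coe_le_coe_iff, hsum]
        nlinarith [mul_le_mul_of_nonneg_left hqd hl]
    _ ≤ dualObjective φ p x ε l μ :=
        add_le_add le_rfl (coe_lagrangian_le_sum_psiPersp hφpos hp hl _ q hq.1 hqfin)

theorem exists_supporting_hyperplane_attainableSet (hφpos : ∀ t, 0 ≤ φ t)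
    (hφconv : ∀ t₁ t₂ : ℝ, ∀ u : ℝ, 0 < u → u < 1 →
      φ (u * t₁ + (1 - u) * t₂) ≤ (u : EReal) * φ t₁ + ((1 - u : ℝ) : EReal) * φ t₂)
    (hφIoi : Set.Ioi 0 ⊆ {t | φ t ≠ ⊤}) (hφ1 : φ 1 = 0)
    (hp : p ∈ stdSimplex ℝ (Fin N)) (hppos : ∀ i, 0 < p i) {ε : ℝ} (hε : 0 < ε)
    (x : Fin N → ℝ) {s : ℝ}
    (hs : ∀ q ∈ stdSimplex ℝ (Fin N), phiDiv φ q p ≤ ε → ∑ i, q i * x i ≤ s) :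
    ∃ A B K : ℝ, A ≤ 0 ∧ 0 < K ∧
      ∀ z ∈ attainableSet φ p x, z.1 * A + z.2.1 * B + z.2.2 * K ≤ ε * A + B + s * K := by
  have hφ := convexOn_toReal hφpos hφconv
  have hpx : ∑ i, p i * x i ≤ s :=
    hs p hp (by rw [phiDiv_self hφ1 hppos]; exact_mod_cast hε.le)
  obtain ⟨f, hlt, hle⟩ :=
    (convex_attainableSet hφ hppos x).exists_lt_and_forall_le_of_notMem_interior
      (mem_interior_attainableSet hφ hφIoi hφ1 hppos hp.2 x hε (sub_one_lt _))
      (notMem_interior_attainableSet hφpos hppos x hs)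
  have hf : ∀ a b c : ℝ, f (a, b, c) = a * f (1, 0, 0) + b * f (0, 1, 0) + c * f (0, 0, 1) := by
    intro a b c
    rw [← smul_eq_mul, ← smul_eq_mul, ← smul_eq_mul, ← map_smul, ← map_smul, ← map_smul,
      ← map_add, ← map_add]
    simp
  set A := f (1, 0, 0)
  set B := f (0, 1, 0)
  set K := f (0, 0, 1)
  rw [hf, hf] at hlt
  -- the two points compared in `hlt` differ only in the last coordinate
  have hK : 0 < K := by nlinarith
  refine ⟨A, B, K, ?_, hK, fun ⟨d, m, v⟩ hz => by
    simpa [hf] using hle _ hz⟩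
  by_contra! hA
  set n := ((s - ∑ i, p i * x i + 1) * K + 1) / A
  have hn : 0 ≤ n := by
    have := mul_pos (by linarith : 0 < s - ∑ i, p i * x i + 1) hK
    positivity
  have hmem := mem_attainableSet_of_smul hφIoi hppos hp.2 x (d := ε + n)
    (v := ∑ i, p i * x i - 1) one_pos
    (by rw [hφ1]; exact_mod_cast (by linarith : 0 ≤ ε + n)) (by simp)
  have := hle _ hmem
  rw [hf, hf, add_mul, div_mul_cancel₀ _ hA.ne'] at this
  linarith

theorem exists_lagrangian_le (hφpos : ∀ t, 0 ≤ φ t)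
    (hφconv : ∀ t₁ t₂ : ℝ, ∀ u : ℝ, 0 < u → u < 1 →
      φ (u * t₁ + (1 - u) * t₂) ≤ (u : EReal) * φ t₁ + ((1 - u : ℝ) : EReal) * φ t₂)
    (hφIoi : Set.Ioi 0 ⊆ {t | φ t ≠ ⊤}) (hφ1 : φ 1 = 0)
    (hp : p ∈ stdSimplex ℝ (Fin N)) (hppos : ∀ i, 0 < p i) {ε : ℝ} (hε : 0 < ε)
    (x : Fin N → ℝ) {s : ℝ}
    (hs : ∀ q ∈ stdSimplex ℝ (Fin N), phiDiv φ q p ≤ ε → ∑ i, q i * x i ≤ s) :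
    ∃ l, 0 ≤ l ∧ ∃ μ, ∀ q : Fin N → ℝ, (∀ i, 0 ≤ q i) → (∀ i, φ (q i / p i) ≠ ⊤) →
      ∑ i, q i * (x i - μ) - l * phiDivReal φ q p ≤ s - μ - l * ε := by
  obtain ⟨A, B, K, hA, hK, hle⟩ :=
    exists_supporting_hyperplane_attainableSet hφpos hφconv hφIoi hφ1 hp hppos hε x hs
  refine ⟨-A / K, div_nonneg (neg_nonneg.2 hA) hK.le, -B / K, fun q hq0 hqfin => ?_⟩
  have hq := hle (phiDivReal φ q p, ∑ i, q i, ∑ i, q i * x i)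
    ⟨q, hq0, hqfin, le_rfl, rfl, le_rfl⟩
  have hsum : ∑ i, q i * (x i - -B / K) = ∑ i, q i * x i - -B / K * ∑ i, q i := by
    simp only [mul_sub, Finset.sum_sub_distrib, ← Finset.sum_mul]; ring
  have hBK : -B / K * K = -B := div_mul_cancel₀ _ hK.ne'
  have hAK : -A / K * K = -A := div_mul_cancel₀ _ hK.ne'
  rw [hsum]
  refine le_of_mul_le_mul_right ?_ hK
  linear_combination hq - (∑ i, q i - 1) * hBK - (phiDivReal φ q p - ε) * hAK

theorem exists_dualObjective_le (hφpos : ∀ t, 0 ≤ φ t)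
    (hφconv : ∀ t₁ t₂ : ℝ, ∀ u : ℝ, 0 < u → u < 1 →
      φ (u * t₁ + (1 - u) * t₂) ≤ (u : EReal) * φ t₁ + ((1 - u : ℝ) : EReal) * φ t₂)
    (hφIoi : Set.Ioi 0 ⊆ {t | φ t ≠ ⊤}) (hφIci : {t | φ t ≠ ⊤} ⊆ Set.Ici 0) (hφ1 : φ 1 = 0)
    (hp : p ∈ stdSimplex ℝ (Fin N)) (hppos : ∀ i, 0 < p i) {ε : ℝ} (hε : 0 < ε)
    (x : Fin N → ℝ) {s : ℝ}
    (hs : ∀ q ∈ stdSimplex ℝ (Fin N), phiDiv φ q p ≤ ε → ∑ i, q i * x i ≤ s) :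
    ∃ l, 0 ≤ l ∧ ∃ μ, dualObjective φ p x ε l μ ≤ s := by
  obtain ⟨l, hl, μ, hlag⟩ := exists_lagrangian_le hφpos hφconv hφIoi hφ1 hp hppos hε x hs
  refine ⟨l, hl, μ, ?_⟩
  calc dualObjective φ p x ε l μ ≤ ((l * ε + μ : ℝ) : EReal) + ((s - μ - l * ε : ℝ) : EReal) :=
        add_le_add le_rfl
          (sum_psiPersp_le_of_lagrangian_le hφpos hφIoi hφIci hppos hl (fun i => x i - μ) hlag)
    _ = s := by rw [← EReal.coe_add]; ring_nf

end Duality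

theorem stmt_12_general {N : ℕ} (φ : ℝ → EReal)
    (hφpos : ∀ t, 0 ≤ φ t)
    (hφconv : ∀ t₁ t₂ : ℝ, ∀ u : ℝ, 0 < u → u < 1 →
      φ (u * t₁ + (1 - u) * t₂) ≤ (u : EReal) * φ t₁ + ((1 - u : ℝ) : EReal) * φ t₂)
    (hφdom : {t : ℝ | φ t ≠ ⊤} = Set.Ioi (0 : ℝ) ∨ {t : ℝ | φ t ≠ ⊤} = Set.Ici (0 : ℝ))
    (hφ1 : φ 1 = 0)
    (p : Fin N → ℝ) (hp : p ∈ stdSimplex ℝ (Fin N)) (hppos : ∀ i, 0 < p i)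
    (ε : ℝ) (hε : 0 < ε) (x : Fin N → ℝ) :
    IsLeast
      {v : EReal | ∃ l : ℝ, 0 ≤ l ∧ ∃ μ : ℝ,
        v = (((l * ε + μ : ℝ)) : EReal) + ∑ i, ((p i : ℝ) : EReal) * psiPersp φ l (x i - μ)}
      (⨆ q ∈ {q ∈ stdSimplex ℝ (Fin N) | phiDiv φ q p ≤ ((ε : ℝ) : EReal)},
        (((∑ i, q i * x i : ℝ)) : EReal)) := by
  have hφIoi : Set.Ioi 0 ⊆ {t | φ t ≠ ⊤} := by
    rcases hφdom with h | h <;> simp [h]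
  have hφIci : {t | φ t ≠ ⊤} ⊆ Set.Ici 0 := by
    rcases hφdom with h | h <;> simp [h]
  set S := ⨆ q ∈ {q ∈ stdSimplex ℝ (Fin N) | phiDiv φ q p ≤ ((ε : ℝ) : EReal)},
    (((∑ i, q i * x i : ℝ)) : EReal)
  have hweak : ∀ l, 0 ≤ l → ∀ μ, S ≤ dualObjective φ p x ε l μ := fun l hl μ =>
    iSup₂_le fun q hq => coe_sum_mul_le_dualObjective hφpos hppos hq.1 hq.2 x hl μ
  have hS_ne_bot : S ≠ ⊥ :=
    ne_bot_of_le_ne_bot (EReal.coe_ne_bot (∑ i, p i * x i)) (le_iSup₂_of_le p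
      ⟨hp, by rw [phiDiv_self hφ1 hppos]; exact_mod_cast hε.le⟩ le_rfl)
  have hS_ne_top : S ≠ ⊤ := by
    have hμ : ∀ i, x i ≤ ∑ j, |x j| := fun i => (le_abs_self _).trans
      (Finset.single_le_sum (fun j _ => abs_nonneg (x j)) (Finset.mem_univ i))
    exact ne_top_of_le_ne_top (EReal.coe_ne_top _)
      ((hweak 0 le_rfl _).trans_eq (dualObjective_zero_of_forall_le hμ ε))
  obtain ⟨s, hs⟩ : ∃ s : ℝ, S = s := ⟨S.toReal, (EReal.coe_toReal hS_ne_top hS_ne_bot).symm⟩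
  obtain ⟨l, hl, μ, hdual⟩ := exists_dualObjective_le hφpos hφconv hφIoi hφIci hφ1 hp hppos hε x
    (s := s) fun q hq hqε => EReal.coe_le_coe_iff.1 (hs ▸ le_iSup₂_of_le q ⟨hq, hqε⟩ le_rfl)
  exact ⟨⟨l, hl, μ, le_antisymm (hweak l hl μ) (hs ▸ hdual)⟩,
    fun v ⟨l, hl, μ, hv⟩ => hv ▸ hweak l hl μ⟩

/-- for a lsc convex `φ : ℝ → [0,+∞]` with `φ(1) = 0` whose domain equals
`(0,+∞)` or `[0,+∞)`, `p ∈ M₁` with all `p_i > 0`, and `ε > 0`, for every `x ∈ ℝ^N`: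
`sup {⟨q,x⟩ : q ∈ M₁, D_φ(q,p) ≤ ε} = min_{λ ≥ 0, μ} (λε + μ + Σ_i p_i ψ(λ, x_i − μ))`,
the minimum over `(λ, μ)` being attained. -/
theorem stmt_12 {N : ℕ} (hN : 1 ≤ N) (φ : ℝ → EReal)
    (hφpos : ∀ t, 0 ≤ φ t)
    (hφlsc : LowerSemicontinuous φ)
    (hφconv : ∀ t₁ t₂ : ℝ, ∀ u : ℝ, 0 < u → u < 1 →
      φ (u * t₁ + (1 - u) * t₂) ≤ (u : EReal) * φ t₁ + ((1 - u : ℝ) : EReal) * φ t₂)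
    (hφdom : {t : ℝ | φ t ≠ ⊤} = Set.Ioi (0 : ℝ) ∨ {t : ℝ | φ t ≠ ⊤} = Set.Ici (0 : ℝ))
    (hφ1 : φ 1 = 0)
    (p : Fin N → ℝ) (hp : p ∈ stdSimplex ℝ (Fin N)) (hppos : ∀ i, 0 < p i)
    (ε : ℝ) (hε : 0 < ε) (x : Fin N → ℝ) :
    IsLeast
      {v : EReal | ∃ l : ℝ, 0 ≤ l ∧ ∃ μ : ℝ,
        v = (((l * ε + μ : ℝ)) : EReal) + ∑ i, ((p i : ℝ) : EReal) * psiPersp φ l (x i - μ)}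
      (⨆ q ∈ {q ∈ stdSimplex ℝ (Fin N) | phiDiv φ q p ≤ ((ε : ℝ) : EReal)},
        (((∑ i, q i * x i : ℝ)) : EReal)) :=
  stmt_12_general φ hφpos hφconv hφdom hφ1 p hp hppos ε hε x
end

section
/- Let z_1, …, z_N ∈ ℝ^d, let p ∈ M₁, and let ε > 0. For q ∈ M₁ define the Wasserstein distance W(p, q) as the infimum of Σ_{i=1}^N Σ_{j=1}^N Π_{ij} ‖z_i − z_j‖ over all matrices Π ∈ ℝ^{N×N} with Π_{ij} ≥ 0 for all i, j, Σ_{j=1}^N Π_{ij} = q_i for all i, and Σ_{i=1}^N Π_{ij} = p_j for all j, where ‖·‖ is the Euclidean norm on ℝ^d. Then for every x ∈ ℝ^N: sup{ ⟨q, x⟩ : q ∈ M₁, W(p, q) ≤ ε } = min{ λ ε + Σ_{j=1}^N p_j s_j : λ ≥ 0, s ∈ ℝ^N, and x_i − λ ‖z_i − z_j‖ ≤ s_j for all i, j ∈ {1,…,N} }, and the minimum over (λ, s) on the right-hand side is attained. -/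
open scoped BigOperators

/-- Discrete Wasserstein distance between the distributions with weights `p` and `q`
supported on the points `z_1, …, z_N ∈ ℝ^d`, with Euclidean ground metric:
the infimum of `Σ_{i,j} Π_{ij} ‖z_i − z_j‖` over couplings `Π` with row sums `q`
and column sums `p`. -/
noncomputable def wassDist {N d : ℕ} (z : Fin N → EuclideanSpace ℝ (Fin d))
    (p q : Fin N → ℝ) : ℝ :=
  sInf {c : ℝ | ∃ Pi : Fin N → Fin N → ℝ,
    (∀ i j, 0 ≤ Pi i j) ∧ (∀ i, ∑ j, Pi i j = q i) ∧ (∀ j, ∑ i, Pi i j = p j) ∧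
    c = ∑ i, ∑ j, Pi i j * ‖z i - z j‖}

set_option maxHeartbeats 1000000 in
/-- for points `z_1, …, z_N ∈ ℝ^d`, `p ∈ M₁` and `ε > 0`, for every
`x ∈ ℝ^N`: `sup {⟨q,x⟩ : q ∈ M₁, W(p,q) ≤ ε}` equals
`min {λε + Σ_j p_j s_j : λ ≥ 0, s ∈ ℝ^N, x_i − λ‖z_i − z_j‖ ≤ s_j ∀ i,j}`,
the minimum over `(λ, s)` being attained. -/
theorem stmt_17 {N d : ℕ} (hN : 1 ≤ N) (hd : 1 ≤ d)
    (z : Fin N → EuclideanSpace ℝ (Fin d))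
    (p : Fin N → ℝ) (hp : p ∈ stdSimplex ℝ (Fin N))
    (ε : ℝ) (hε : 0 < ε) (x : Fin N → ℝ) :
    IsLeast
      {v : ℝ | ∃ l : ℝ, 0 ≤ l ∧ ∃ s : Fin N → ℝ,
        (∀ i j, x i - l * ‖z i - z j‖ ≤ s j) ∧ v = l * ε + ∑ j, p j * s j}
      (sSup {r : ℝ | ∃ q ∈ stdSimplex ℝ (Fin N),
        wassDist z p q ≤ ε ∧ r = ∑ i, q i * x i}) := by
  have hNe : (Finset.univ : Finset (Fin N)).Nonempty := ⟨⟨0, hN⟩, Finset.mem_univ _⟩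
  obtain ⟨hp0, hp1⟩ := hp
  set c : Fin N → Fin N → ℝ := fun i j => ‖z i - z j‖ with hc
  have hc0 : ∀ i j, 0 ≤ c i j := fun i j => norm_nonneg _
  have hcd : ∀ i, c i i = 0 := fun i => by simp [hc]
  -- weak duality
  have wd : ∀ q ∈ stdSimplex ℝ (Fin N), wassDist z p q ≤ ε →
      ∀ l : ℝ, 0 ≤ l → ∀ s : Fin N → ℝ, (∀ i j, x i - l * c i j ≤ s j) →
      ∑ i, q i * x i ≤ l * ε + ∑ j, p j * s j := by
    intro q hq hW l hl s hs
    set W : Set ℝ := {C : ℝ | ∃ Pi : Fin N → Fin N → ℝ,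
      (∀ i j, 0 ≤ Pi i j) ∧ (∀ i, ∑ j, Pi i j = q i) ∧ (∀ j, ∑ i, Pi i j = p j) ∧
      C = ∑ i, ∑ j, Pi i j * ‖z i - z j‖} with hWdef
    have hWne : W.Nonempty := by
      refine ⟨∑ i, ∑ j, (q i * p j) * ‖z i - z j‖, fun i j => q i * p j,
        fun i j => mul_nonneg (hq.1 i) (hp0 j), ?_, ?_, rfl⟩
      · intro i; rw [← Finset.mul_sum, hp1, mul_one]
      · intro j; rw [← Finset.sum_mul, hq.2, one_mul]
    have key : ∀ C ∈ W, ∑ i, q i * x i ≤ l * C + ∑ j, p j * s j := by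
      rintro C ⟨Pi, hPi0, hrow, hcol, rfl⟩
      have h1 : ∑ i, q i * x i = ∑ i, ∑ j, Pi i j * x i := by
        refine Finset.sum_congr rfl fun i _ => ?_
        rw [← hrow i, Finset.sum_mul]
      rw [h1]
      have h2 : ∀ i j, Pi i j * x i ≤ Pi i j * (s j + l * c i j) := by
        intro i j
        exact mul_le_mul_of_nonneg_left (by linarith [hs i j]) (hPi0 i j)
      calc ∑ i, ∑ j, Pi i j * x i
          ≤ ∑ i, ∑ j, Pi i j * (s j + l * c i j) :=
            Finset.sum_le_sum fun i _ => Finset.sum_le_sum fun j _ => h2 i j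
        _ = (∑ i, ∑ j, Pi i j * s j) + l * (∑ i, ∑ j, Pi i j * ‖z i - z j‖) := by
            simp only [hc]
            rw [Finset.mul_sum, ← Finset.sum_add_distrib]
            refine Finset.sum_congr rfl fun i _ => ?_
            rw [Finset.mul_sum, ← Finset.sum_add_distrib]
            exact Finset.sum_congr rfl fun j _ => by ring
        _ = l * (∑ i, ∑ j, Pi i j * ‖z i - z j‖) + ∑ j, p j * s j := by
            have h3 : ∑ i, ∑ j, Pi i j * s j = ∑ j, p j * s j := by
              rw [Finset.sum_comm]
              exact Finset.sum_congr rfl fun j _ => by rw [← Finset.sum_mul, hcol j]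
            rw [h3]; ring
    rcases eq_or_lt_of_le hl with hl0 | hlpos
    · obtain ⟨C0, hC0⟩ := hWne
      have := key C0 hC0
      rw [← hl0] at this ⊢
      simpa using this
    · have hinf : (∑ i, q i * x i - ∑ j, p j * s j) / l ≤ wassDist z p q := by
        rw [wassDist]
        apply le_csInf hWne
        intro C hC
        rw [div_le_iff₀ hlpos]
        have := key C hC
        linarith [mul_comm C l]
      rw [div_le_iff₀ hlpos] at hinf
      have : wassDist z p q * l ≤ ε * l := by
        exact mul_le_mul_of_nonneg_right hW (le_of_lt hlpos)
      nlinarith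
  -- the dual objective
  set g : ℝ → Fin N → ℝ := fun l j => Finset.univ.sup' hNe (fun i => x i - l * c i j) with hg
  set f : ℝ → ℝ := fun l => l * ε + ∑ j, p j * g l j with hf
  have hgle : ∀ l j i, x i - l * c i j ≤ g l j := fun l j i =>
    Finset.le_sup' (fun i => x i - l * c i j) (Finset.mem_univ i)
  have contf : Continuous f := by
    apply Continuous.add (continuous_id.mul continuous_const)
    apply continuous_finset_sum
    intro j _
    apply Continuous.mul continuous_const
    exact Continuous.finset_sup'_apply hNe fun i _ =>
      (continuous_const.sub (continuous_id.mul continuous_const))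
  -- lower bound on f
  set C0 : ℝ := ∑ j, p j * x j with hC0
  have hflb : ∀ l : ℝ, 0 ≤ l → l * ε + C0 ≤ f l := by
    intro l hl
    have : ∀ j, p j * x j ≤ p j * g l j := by
      intro j
      apply mul_le_mul_of_nonneg_left _ (hp0 j)
      have := hgle l j j
      rw [hcd j] at this
      linarith
    have := Finset.sum_le_sum (fun j (_ : j ∈ Finset.univ) => this j)
    simp only [hf, hC0]
    linarith
  -- minimizer over [0, R]
  set R : ℝ := max 0 ((f 0 - C0) / ε) with hR
  obtain ⟨L, hLmem, hLmin⟩ := isCompact_Icc.exists_isMinOn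
    (Set.nonempty_Icc.mpr (le_max_left 0 _)) contf.continuousOn
  have hL0 : 0 ≤ L := hLmem.1
  have hglob : ∀ l : ℝ, 0 ≤ l → f L ≤ f l := by
    intro l hl
    rcases le_or_gt l R with h | h
    · exact hLmin ⟨hl, h⟩
    · have h1 : (f 0 - C0) / ε ≤ R := le_max_right _ _
      have h2 : f 0 - C0 ≤ R * ε := by
        rw [div_le_iff₀ hε] at h1; linarith
      have h3 : f L ≤ f 0 := hLmin ⟨le_refl 0, le_max_left 0 _⟩
      have h4 := hflb l hl
      nlinarith
  -- argmax sets at L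
  set S : Fin N → Finset (Fin N) :=
    fun j => Finset.univ.filter (fun i => x i - L * c i j = g L j) with hS
  have hSne : ∀ j, (S j).Nonempty := by
    intro j
    obtain ⟨i, _, hi⟩ := Finset.exists_mem_eq_sup' hNe (fun i => x i - L * c i j)
    exact ⟨i, Finset.mem_filter.mpr ⟨Finset.mem_univ i, hi.symm⟩⟩
  set m : Fin N → ℝ := fun j => (S j).inf' (hSne j) (fun i => c i j) with hm
  set M : Fin N → ℝ := fun j => (S j).sup' (hSne j) (fun i => c i j) with hM
  have himin := fun j => Finset.exists_mem_eq_inf' (hSne j) (fun i => c i j)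
  have himax := fun j => Finset.exists_mem_eq_sup' (hSne j) (fun i => c i j)
  choose imin hminS hmineq0 using himin
  choose imax hmaxS hmaxeq0 using himax
  have hmineq : ∀ j, m j = c (imin j) j := hmineq0
  have hmaxeq : ∀ j, M j = c (imax j) j := hmaxeq0
  have hSmem : ∀ j i, i ∈ S j → x i - L * c i j = g L j := by
    intro j i hi; exact (Finset.mem_filter.mp hi).2
  have hm0 : ∀ j, 0 ≤ m j := fun j => (hmineq j) ▸ hc0 (imin j) j
  have hM0 : ∀ j, 0 ≤ M j := fun j => (hmaxeq j) ▸ hc0 (imax j) j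
  have hmM : ∀ j, m j ≤ M j := by
    intro j
    rw [hmineq j]
    exact Finset.le_sup' (fun i => c i j) (hminS j)
  -- uniform bounds
  set Cmax : ℝ := Finset.univ.sup' hNe (fun i => Finset.univ.sup' hNe (c i)) with hCm
  have hCle : ∀ i j, c i j ≤ Cmax := by
    intro i j
    calc c i j ≤ Finset.univ.sup' hNe (c i) := Finset.le_sup' _ (Finset.mem_univ j)
      _ ≤ Cmax := Finset.le_sup' (fun i => Finset.univ.sup' hNe (c i)) (Finset.mem_univ i)
  have hCm0 : 0 ≤ Cmax := le_trans (hc0 ⟨0, hN⟩ ⟨0, hN⟩) (hCle _ _)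
  have hmC : ∀ j, m j ≤ Cmax := fun j => (hmineq j) ▸ hCle (imin j) j
  have hMC : ∀ j, M j ≤ Cmax := fun j => (hmaxeq j) ▸ hCle (imax j) j
  -- the gap δ
  set T : Finset (Fin N × Fin N) :=
    (Finset.univ ×ˢ Finset.univ).filter (fun jk => jk.2 ∉ S jk.1) with hT
  set δ : ℝ := if hTne : T.Nonempty
    then T.inf' hTne (fun jk => g L jk.1 - (x jk.2 - L * c jk.2 jk.1)) else 1 with hδ
  have hδpos : 0 < δ := by
    rw [hδ]
    split_ifs with hTne
    · rw [Finset.lt_inf'_iff]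
      rintro ⟨j, k⟩ hjk
      have hkS : k ∉ S j := (Finset.mem_filter.mp hjk).2
      have h1 : x k - L * c k j ≤ g L j := hgle L j k
      have h2 : x k - L * c k j ≠ g L j := by
        intro h; exact hkS (Finset.mem_filter.mpr ⟨Finset.mem_univ k, h⟩)
      have h3 := lt_of_le_of_ne h1 h2
      show 0 < g L j - (x k - L * c k j)
      linarith
    · norm_num
  have hδle : ∀ j k, k ∉ S j → δ ≤ g L j - (x k - L * c k j) := by
    intro j k hk
    have hjk : (j, k) ∈ T := Finset.mem_filter.mpr
      ⟨Finset.mem_product.mpr ⟨Finset.mem_univ _, Finset.mem_univ _⟩, hk⟩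
    have hTne : T.Nonempty := ⟨(j, k), hjk⟩
    rw [hδ, dif_pos hTne]
    exact Finset.inf'_le _ hjk
  set A : ℝ := ∑ j, p j * m j with hA
  set B : ℝ := ∑ j, p j * M j with hB
  have hABle : A ≤ B := Finset.sum_le_sum fun j _ =>
    mul_le_mul_of_nonneg_left (hmM j) (hp0 j)
  -- upper bound on g (L + t)
  have hgup : ∀ t : ℝ, 0 < t → t * Cmax ≤ δ → ∀ j, g (L + t) j ≤ g L j - t * m j := by
    intro t ht htC j
    obtain ⟨k, _, hkeq⟩ := Finset.exists_mem_eq_sup' hNe (fun i => x i - (L + t) * c i j)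
    have hkeq' : g (L + t) j = x k - (L + t) * c k j := hkeq
    by_cases hkS : k ∈ S j
    · have h1 : x k - L * c k j = g L j := hSmem j k hkS
      have h2 : m j ≤ c k j := Finset.inf'_le (fun i => c i j) hkS
      have h3 : t * m j ≤ t * c k j := mul_le_mul_of_nonneg_left h2 (le_of_lt ht)
      rw [hkeq']; nlinarith
    · have h1 : δ ≤ g L j - (x k - L * c k j) := hδle j k hkS
      have h2 : t * m j ≤ t * Cmax := mul_le_mul_of_nonneg_left (hmC j) (le_of_lt ht)
      have h3 : 0 ≤ t * c k j := mul_nonneg (le_of_lt ht) (hc0 k j)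
      rw [hkeq']; nlinarith
  -- lower bound direction: g (L - t)
  have hgdn : ∀ t : ℝ, 0 < t → t * Cmax ≤ δ → ∀ j, g (L - t) j ≤ g L j + t * M j := by
    intro t ht htC j
    obtain ⟨k, _, hkeq⟩ := Finset.exists_mem_eq_sup' hNe (fun i => x i - (L - t) * c i j)
    have hkeq' : g (L - t) j = x k - (L - t) * c k j := hkeq
    by_cases hkS : k ∈ S j
    · have h1 : x k - L * c k j = g L j := hSmem j k hkS
      have h2 : c k j ≤ M j := Finset.le_sup' (fun i => c i j) hkS
      have h3 : t * c k j ≤ t * M j := mul_le_mul_of_nonneg_left h2 (le_of_lt ht)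
      rw [hkeq']; nlinarith
    · have h1 : δ ≤ g L j - (x k - L * c k j) := hδle j k hkS
      have h2 : t * c k j ≤ t * Cmax := mul_le_mul_of_nonneg_left (hCle k j) (le_of_lt ht)
      have h3 : 0 ≤ t * M j := mul_nonneg (le_of_lt ht) (hM0 j)
      rw [hkeq']; nlinarith
  set t₀ : ℝ := δ / (Cmax + 1) with ht₀def
  have ht₀ : 0 < t₀ := div_pos hδpos (by linarith)
  have ht₀C : t₀ * Cmax ≤ δ := by
    rw [ht₀def, div_mul_eq_mul_div, div_le_iff₀ (by linarith : (0:ℝ) < Cmax + 1)]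
    nlinarith
  -- A ≤ ε
  have hAε : A ≤ ε := by
    have h1 := hglob (L + t₀) (by linarith)
    have h2 : ∑ j, p j * g (L + t₀) j ≤ ∑ j, p j * (g L j - t₀ * m j) :=
      Finset.sum_le_sum fun j _ => mul_le_mul_of_nonneg_left (hgup t₀ ht₀ ht₀C j) (hp0 j)
    have h3 : ∑ j, p j * (g L j - t₀ * m j) = (∑ j, p j * g L j) - t₀ * A := by
      rw [hA, Finset.mul_sum, ← Finset.sum_sub_distrib]
      exact Finset.sum_congr rfl fun j _ => by ring
    have h4 : f (L + t₀) = (L + t₀) * ε + ∑ j, p j * g (L + t₀) j := rfl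
    have h5 : f L = L * ε + ∑ j, p j * g L j := rfl
    have h7 : (L + t₀) * ε = L * ε + t₀ * ε := by ring
    have h6 : t₀ * A ≤ t₀ * ε := by linarith
    exact le_of_mul_le_mul_left h6 ht₀
  -- if L > 0 then ε ≤ B
  have hBε : 0 < L → ε ≤ B := by
    intro hLpos
    set t₁ : ℝ := min t₀ L with ht₁def
    have ht₁ : 0 < t₁ := lt_min ht₀ hLpos
    have ht₁C : t₁ * Cmax ≤ δ :=
      le_trans (mul_le_mul_of_nonneg_right (min_le_left _ _) hCm0) ht₀C
    have ht₁L : t₁ ≤ L := min_le_right t₀ L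
    have h1 := hglob (L - t₁) (by linarith)
    have h2 : ∑ j, p j * g (L - t₁) j ≤ ∑ j, p j * (g L j + t₁ * M j) :=
      Finset.sum_le_sum fun j _ => mul_le_mul_of_nonneg_left (hgdn t₁ ht₁ ht₁C j) (hp0 j)
    have h3 : ∑ j, p j * (g L j + t₁ * M j) = (∑ j, p j * g L j) + t₁ * B := by
      rw [hB, Finset.mul_sum, ← Finset.sum_add_distrib]
      exact Finset.sum_congr rfl fun j _ => by ring
    have h4 : f (L - t₁) = (L - t₁) * ε + ∑ j, p j * g (L - t₁) j := rfl
    have h5 : f L = L * ε + ∑ j, p j * g L j := rfl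
    have h7 : (L - t₁) * ε = L * ε - t₁ * ε := by ring
    have h6 : t₁ * ε ≤ t₁ * B := by linarith
    exact le_of_mul_le_mul_left h6 ht₁
  -- choose mixing parameter θ
  obtain ⟨θ, hθ0, hθ1, hcle, hceq⟩ : ∃ θ : ℝ, 0 ≤ θ ∧ θ ≤ 1 ∧
      θ * A + (1 - θ) * B ≤ ε ∧ L * (θ * A + (1 - θ) * B) = L * ε := by
    by_cases hL : L = 0
    · exact ⟨1, zero_le_one, le_refl 1, by simpa using hAε, by simp [hL]⟩
    · have hLpos : 0 < L := lt_of_le_of_ne hL0 (Ne.symm hL)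
      have hBe := hBε hLpos
      by_cases hab : A < B
      · refine ⟨(B - ε) / (B - A), div_nonneg (by linarith) (by linarith), ?_, ?_, ?_⟩
        · rw [div_le_one (by linarith)]; linarith
        · have h := div_mul_cancel₀ (B - ε) (by linarith : B - A ≠ 0)
          nlinarith [h]
        · have h := div_mul_cancel₀ (B - ε) (by linarith : B - A ≠ 0)
          have : (B - ε) / (B - A) * A + (1 - (B - ε) / (B - A)) * B = ε := by nlinarith [h]
          rw [this]
      · have hAB : A = B := le_antisymm hABle (not_lt.mp hab)
        have hAe : A = ε := le_antisymm hAε (hAB ▸ hBe)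
        exact ⟨1, zero_le_one, le_refl 1, by simp [hAe], by simp [hAe]⟩
  -- the optimal coupling
  set Pi : Fin N → Fin N → ℝ := fun i j =>
    p j * (θ * (if i = imin j then 1 else 0) + (1 - θ) * (if i = imax j then 1 else 0))
    with hPi
  have hPi0 : ∀ i j, 0 ≤ Pi i j := by
    intro i j
    apply mul_nonneg (hp0 j)
    apply add_nonneg
    · apply mul_nonneg hθ0; split_ifs <;> norm_num
    · apply mul_nonneg (by linarith); split_ifs <;> norm_num
  have hcol : ∀ j, ∑ i, Pi i j = p j := by
    intro j
    rw [← Finset.mul_sum, Finset.sum_add_distrib, ← Finset.mul_sum, ← Finset.mul_sum]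
    simp [Finset.sum_ite_eq]
  set Q : Fin N → ℝ := fun i => ∑ j, Pi i j with hQ
  have hrow : ∀ i, ∑ j, Pi i j = Q i := fun i => rfl
  have hQ0 : ∀ i, 0 ≤ Q i := fun i => Finset.sum_nonneg fun j _ => hPi0 i j
  have hQ1 : ∑ i, Q i = 1 := by
    calc ∑ i, Q i = ∑ j, ∑ i, Pi i j := Finset.sum_comm
      _ = ∑ j, p j := Finset.sum_congr rfl fun j _ => hcol j
      _ = 1 := hp1
  have hQmem : Q ∈ stdSimplex ℝ (Fin N) := ⟨hQ0, hQ1⟩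
  -- per-column sums against arbitrary weight function
  have hsum : ∀ w : Fin N → Fin N → ℝ, ∀ j,
      ∑ i, Pi i j * w i j = p j * (θ * w (imin j) j + (1 - θ) * w (imax j) j) := by
    intro w j
    have : ∀ i, Pi i j * w i j =
        p j * (θ * (if i = imin j then w i j else 0)
          + (1 - θ) * (if i = imax j then w i j else 0)) := by
      intro i
      show p j * (θ * (if i = imin j then 1 else 0)
          + (1 - θ) * (if i = imax j then 1 else 0)) * w i j = _
      by_cases h1 : i = imin j <;> by_cases h2 : i = imax j
      · rw [if_pos h1, if_pos h2, if_pos h1, if_pos h2]; ring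
      · rw [if_pos h1, if_neg h2, if_pos h1, if_neg h2]; ring
      · rw [if_neg h1, if_pos h2, if_neg h1, if_pos h2]; ring
      · rw [if_neg h1, if_neg h2, if_neg h1, if_neg h2]; ring
    rw [Finset.sum_congr rfl fun i _ => this i]
    rw [← Finset.mul_sum, Finset.sum_add_distrib, ← Finset.mul_sum, ← Finset.mul_sum]
    simp [Finset.sum_ite_eq]
  have hcost : ∑ i, ∑ j, Pi i j * c i j = θ * A + (1 - θ) * B := by
    rw [Finset.sum_comm]
    rw [Finset.sum_congr rfl fun j _ => hsum (fun i j => c i j) j]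
    rw [hA, hB, Finset.mul_sum, Finset.mul_sum, ← Finset.sum_add_distrib]
    refine Finset.sum_congr rfl fun j _ => ?_
    rw [← hmineq j, ← hmaxeq j]  -- careful direction
    ring
  have hxmin : ∀ j, x (imin j) = g L j + L * m j := by
    intro j
    have := hSmem j (imin j) (hminS j)
    rw [hmineq j]; linarith
  have hxmax : ∀ j, x (imax j) = g L j + L * M j := by
    intro j
    have := hSmem j (imax j) (hmaxS j)
    rw [hmaxeq j]; linarith
  have hval : ∑ i, Q i * x i = f L := by
    have h1 : ∑ i, Q i * x i = ∑ j, ∑ i, Pi i j * x i := by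
      rw [Finset.sum_comm]
      exact Finset.sum_congr rfl fun i _ => by rw [← hrow i, Finset.sum_mul]
    rw [h1, Finset.sum_congr rfl fun j _ => hsum (fun i _ => x i) j]
    have h2 : ∀ j, p j * (θ * x (imin j) + (1 - θ) * x (imax j)) =
        p j * g L j + (L * θ) * (p j * m j) + (L * (1 - θ)) * (p j * M j) := by
      intro j; rw [hxmin j, hxmax j]; ring
    rw [Finset.sum_congr rfl fun j _ => h2 j]
    rw [Finset.sum_add_distrib, Finset.sum_add_distrib, ← Finset.mul_sum, ← Finset.mul_sum,
      ← hA, ← hB]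
    show _ = L * ε + ∑ j, p j * g L j
    linear_combination hceq
  -- wassDist bound for Q
  set W2 : Set ℝ := {C : ℝ | ∃ P : Fin N → Fin N → ℝ,
    (∀ i j, 0 ≤ P i j) ∧ (∀ i, ∑ j, P i j = Q i) ∧ (∀ j, ∑ i, P i j = p j) ∧
    C = ∑ i, ∑ j, P i j * ‖z i - z j‖} with hW2
  have hWeq : wassDist z p Q = sInf W2 := rfl
  have hmem : (θ * A + (1 - θ) * B) ∈ W2 := ⟨Pi, hPi0, hrow, hcol, hcost.symm⟩
  have hbdd : BddBelow W2 := by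
    refine ⟨0, ?_⟩
    rintro C ⟨P, hP0, _, _, rfl⟩
    exact Finset.sum_nonneg fun i _ => Finset.sum_nonneg fun j _ =>
      mul_nonneg (hP0 i j) (norm_nonneg _)
  have hWQ : wassDist z p Q ≤ ε := by
    rw [hWeq]
    exact le_trans (csInf_le hbdd hmem) hcle
  -- identify the supremum
  set Sp : Set ℝ := {r | ∃ q ∈ stdSimplex ℝ (Fin N),
    wassDist z p q ≤ ε ∧ r = ∑ i, q i * x i} with hSp
  have hfLmem : f L ∈ Sp := ⟨Q, hQmem, hWQ, hval.symm⟩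
  have hub : ∀ r ∈ Sp, r ≤ f L := by
    rintro r ⟨q, hq, hWq, rfl⟩
    exact wd q hq hWq L hL0 (g L) (fun i j => hgle L j i)
  have hsup : sSup Sp = f L :=
    le_antisymm (csSup_le ⟨f L, hfLmem⟩ hub) (le_csSup ⟨f L, hub⟩ hfLmem)
  constructor
  · rw [hsup]
    exact ⟨L, hL0, g L, fun i j => hgle L j i, rfl⟩
  · rintro v ⟨l, hl, s, hcon, rfl⟩
    rw [hsup]
    calc f L = ∑ i, Q i * x i := hval.symm
      _ ≤ l * ε + ∑ j, p j * s j := wd Q hQmem hWQ l hl s hcon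
end
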